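/- arXiv:1504.07413 — 10 statements merged into one kernel-verified Lean document; each statement's English description precedes it below -/
import Mathlib

section
/- Let H be an m-th order n-dimensional Hankel tensor with generating vector v ∈ ℝ^{m(n−1)+1}, let ℓ = m(n−1)+1, and let C be the m-th order ℓ-dimensional anti-circulant tensor with the same generating vector v. For any x ∈ ℝ^n, let y ∈ ℝ^ℓ be the zero-padded vector y = (x; 0_{ℓ−n}). Then H x^m = C y^m. -/
/-- For a Hankel tensor `H` (order `m`, dimension `n`, generating vector `v`)
and the anti-circulant tensor `C` (order `m`, dimension `ℓ = m(n-1)+1`) with the same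
generating vector, and the zero padded vector `y = (x; 0)`, we have `H x^m = C y^m`. -/
theorem hankel_eq_anticirculant_scalar
    (m n : ℕ) (hm : 0 < m) (hn : 0 < n)
    (v : Fin (m * (n - 1) + 1) → ℝ)
    (H : (Fin m → Fin n) → ℝ)
    (hH : ∀ (g : Fin m → Fin n) (h : (∑ j, (g j : ℕ)) < m * (n - 1) + 1),
      H g = v ⟨∑ j, (g j : ℕ), h⟩)
    (C : (Fin m → Fin (m * (n - 1) + 1)) → ℝ)
    (hC : ∀ g : Fin m → Fin (m * (n - 1) + 1),
      C g = v ⟨(∑ j, (g j : ℕ)) % (m * (n - 1) + 1),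
        Nat.mod_lt _ (Nat.succ_pos _)⟩)
    (x : Fin n → ℝ) (y : Fin (m * (n - 1) + 1) → ℝ)
    (hy : ∀ i : Fin (m * (n - 1) + 1), y i = if h : (i : ℕ) < n then x ⟨(i : ℕ), h⟩ else 0) :
    ∑ g : Fin m → Fin n, H g * ∏ j, x (g j)
      = ∑ g : Fin m → Fin (m * (n - 1) + 1), C g * ∏ j, y (g j) := by
  have hle : n ≤ m * (n - 1) + 1 := by
    have h1 : 1 * (n - 1) ≤ m * (n - 1) := Nat.mul_le_mul_right _ hm
    omega
  have hsumlt : ∀ g : Fin m → Fin n, (∑ j, (g j : ℕ)) < m * (n - 1) + 1 := by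
    intro g
    have h2 : ∑ j, (g j : ℕ) ≤ ∑ _j : Fin m, (n - 1) :=
      Finset.sum_le_sum (fun j _ => by have := (g j).isLt; omega)
    simp [Finset.sum_const, Finset.card_univ, mul_comm] at h2
    omega
  let e : (Fin m → Fin n) → (Fin m → Fin (m * (n - 1) + 1)) := fun g j => Fin.castLE hle (g j)
  have he : Function.Injective e := fun a b hab => funext fun j =>
    Fin.castLE_injective hle (congrFun hab j)
  have key : ∀ g : Fin m → Fin n, H g * ∏ j, x (g j) = C (e g) * ∏ j, y (e g j) := by
    intro g
    have hlt := hsumlt g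
    rw [hH g hlt, hC (e g)]
    congr 1
    · congr 1
      ext
      simp [e, Nat.mod_eq_of_lt hlt]
    · apply Finset.prod_congr rfl
      intro j _
      rw [hy]
      simp [e]
  calc ∑ g : Fin m → Fin n, H g * ∏ j, x (g j)
      = ∑ g : Fin m → Fin n, C (e g) * ∏ j, y (e g j) :=
        Finset.sum_congr rfl (fun g _ => key g)
    _ = ∑ g ∈ Finset.univ.image e, C g * ∏ j, y (g j) :=
        by rw [Finset.sum_image (fun a _ b _ h => he h)]
    _ = ∑ g : Fin m → Fin (m * (n - 1) + 1), C g * ∏ j, y (g j) := by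
        apply Finset.sum_subset (Finset.subset_univ _)
        intro g _ hg
        have hex : ∃ j, ¬ ((g j : ℕ) < n) := by
          by_contra hcon
          push_neg at hcon
          apply hg
          refine Finset.mem_image.2 ⟨fun j => ⟨g j, hcon j⟩, Finset.mem_univ _, ?_⟩
          funext j; exact Fin.ext rfl
        obtain ⟨j, hj⟩ := hex
        have hz : y (g j) = 0 := by rw [hy]; simp [hj]
        rw [Finset.prod_eq_zero (Finset.mem_univ j) hz, mul_zero]
end

section
/- Let H be an m-th order n-dimensional Hankel tensor with generating vector v ∈ ℝ^{m(n−1)+1}, let ℓ = m(n−1)+1, and let C be the m-th order ℓ-dimensional anti-circulant tensor with the same generating vector v. For any x ∈ ℝ^n, let y ∈ ℝ^ℓ be the zero-padded vector y = (x; 0_{ℓ−n}). Then for every i ∈ {1,…,n}, the i-th entry of H x^{m−1} equals the i-th entry of C y^{m−1}; that is, H x^{m−1} consists of the leading n entries of C y^{m−1}. -/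
/-- For a Hankel tensor `H` (order `m`, dimension `n`, generating vector `v`)
and the anti-circulant tensor `C` (order `m`, dimension `ℓ = m(n-1)+1`) with the same
generating vector, and the zero padded vector `y = (x; 0)`, the `i`-th entry of
`H x^{m-1}` equals the `i`-th entry of `C y^{m-1}` for every `i ∈ {1,…,n}`. -/
theorem hankel_eq_anticirculant_vector
    (m n : ℕ) (hm : 0 < m) (hn : 0 < n)
    (v : Fin (m * (n - 1) + 1) → ℝ)
    (H : (Fin m → Fin n) → ℝ)
    (hH : ∀ (g : Fin m → Fin n) (h : (∑ j, (g j : ℕ)) < m * (n - 1) + 1),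
      H g = v ⟨∑ j, (g j : ℕ), h⟩)
    (C : (Fin m → Fin (m * (n - 1) + 1)) → ℝ)
    (hC : ∀ g : Fin m → Fin (m * (n - 1) + 1),
      C g = v ⟨(∑ j, (g j : ℕ)) % (m * (n - 1) + 1),
        Nat.mod_lt _ (Nat.succ_pos _)⟩)
    (x : Fin n → ℝ) (y : Fin (m * (n - 1) + 1) → ℝ)
    (hy : ∀ i : Fin (m * (n - 1) + 1), y i = if h : (i : ℕ) < n then x ⟨(i : ℕ), h⟩ else 0) :
    ∀ i : Fin n,
      (∑ g : Fin m → Fin n,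
        if g ⟨0, hm⟩ = i then H g * ∏ j ∈ Finset.univ.erase ⟨0, hm⟩, x (g j) else 0)
      = ∑ g : Fin m → Fin (m * (n - 1) + 1),
          if g ⟨0, hm⟩ = (⟨(i : ℕ), by
              have h1 := i.2
              have h2 := Nat.le_mul_of_pos_left (n - 1) hm
              omega⟩ : Fin (m * (n - 1) + 1))
          then C g * ∏ j ∈ Finset.univ.erase ⟨0, hm⟩, y (g j) else 0 := by
  intro i
  have hle : n ≤ m * (n - 1) + 1 := by
    have := Nat.le_mul_of_pos_left (n - 1) hm; omega
  set i' : Fin (m * (n - 1) + 1) := ⟨(i : ℕ), by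
      have h1 := i.2
      have h2 := Nat.le_mul_of_pos_left (n - 1) hm
      omega⟩ with hi'
  set F : (Fin m → Fin n) → (Fin m → Fin (m * (n - 1) + 1)) :=
    fun g j => Fin.castLE hle (g j) with hF
  have hFinj : Function.Injective F := by
    intro a b hab
    funext j
    exact Fin.castLE_injective hle (congrFun hab j)
  have hbound : ∀ g : Fin m → Fin n, (∑ j, (g j : ℕ)) < m * (n - 1) + 1 := by
    intro g
    have h1 : (∑ j, (g j : ℕ)) ≤ ∑ _j : Fin m, (n - 1) :=
      Finset.sum_le_sum fun j _ => by have := (g j).2; omega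
    simp only [Finset.sum_const, Finset.card_univ, Fintype.card_fin, smul_eq_mul] at h1
    omega
  have hzero : ∀ g' ∈ (Finset.univ : Finset (Fin m → Fin (m * (n - 1) + 1))),
      g' ∉ Finset.univ.image F →
      (if g' ⟨0, hm⟩ = i' then C g' * ∏ j ∈ Finset.univ.erase ⟨0, hm⟩, y (g' j) else 0) = 0 := by
    intro g' _ hg'
    by_cases hall : ∀ j : Fin m, (g' j : ℕ) < n
    · exact absurd (Finset.mem_image.mpr ⟨fun j => ⟨(g' j : ℕ), hall j⟩, Finset.mem_univ _,
        by funext j; exact Fin.ext rfl⟩) hg'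
    · push_neg at hall
      obtain ⟨j, hj⟩ := hall
      by_cases hcond : g' ⟨0, hm⟩ = i'
      · by_cases hj0 : j = ⟨0, hm⟩
        · exfalso
          have : (g' j : ℕ) = (i : ℕ) := by rw [hj0, hcond]
          have := i.2; omega
        · rw [if_pos hcond]
          have hyj : y (g' j) = 0 := by rw [hy]; exact dif_neg (by omega)
          rw [Finset.prod_eq_zero (Finset.mem_erase.mpr ⟨hj0, Finset.mem_univ _⟩) hyj,
            mul_zero]
      · exact if_neg hcond
  rw [← Finset.sum_subset (Finset.subset_univ (Finset.univ.image F)) hzero,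
    Finset.sum_image (fun a _ b _ h => hFinj h)]
  refine Finset.sum_congr rfl fun g _ => ?_
  have hcond : (F g ⟨0, hm⟩ = i') ↔ (g ⟨0, hm⟩ = i) := by
    simp only [hF, Fin.ext_iff, Fin.coe_castLE, hi']
  by_cases h0 : g ⟨0, hm⟩ = i
  · rw [if_pos h0, if_pos (hcond.mpr h0)]
    congr 1
    · rw [hH g (hbound g), hC]
      congr 1
      apply Fin.ext
      simp only [hF, Fin.coe_castLE]
      exact (Nat.mod_eq_of_lt (hbound g)).symm
    · refine Finset.prod_congr rfl fun j _ => ?_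
      rw [hy]
      have hlt : ((F g j : ℕ)) < n := (g j).2
      rw [dif_pos hlt]
      congr 1
  · rw [if_neg h0, if_neg (fun h => h0 (hcond.mp h))]
end

section
/- Let x, p ∈ ℝ^n with ‖x‖ = 1 and x^T p = 0, let α ∈ ℝ, and set W = −α x p^T + α p x^T (the skew-symmetric matrix a b^T − b a^T with a = x, b = −α p). Then I + W is invertible and the Cayley-transform update satisfies (I + W)^{−1}(I − W) x = [ (1 − α²‖p‖²) x − 2α p ] / (1 + α²‖p‖²). -/
/-!
Since `W` is skew-symmetric, `vᵀ (I + W) v = ‖v‖²`, so `I + W` is invertible. As `‖x‖ = 1` and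
`x ⊥ p`, `W` maps `x ↦ α p` and `p ↦ -α ‖p‖² x`, so the plane spanned by `x` and `p` is invariant
and it suffices to check that the claimed vector, which lies in it, solves `(I + W) y = (I - W) x`.
-/

open Matrix

section SkewSymmetric

variable {ι R : Type*} [Fintype ι]

theorem Matrix.dotProduct_mulVec_self_eq_zero_of_transpose_eq_neg [CommRing R] [NoZeroDivisors R]
    [CharZero R] {W : Matrix ι ι R} (hW : Wᵀ = -W) (v : ι → R) : v ⬝ᵥ W *ᵥ v = 0 := by
  refine self_eq_neg.mp ?_
  calc v ⬝ᵥ W *ᵥ v = Wᵀ *ᵥ v ⬝ᵥ v := by rw [mulVec_transpose, dotProduct_mulVec]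
    _ = -(v ⬝ᵥ W *ᵥ v) := by rw [hW, neg_mulVec, neg_dotProduct, dotProduct_comm]

theorem Matrix.isUnit_one_add_of_transpose_eq_neg [DecidableEq ι] [Field R] [LinearOrder R]
    [IsStrictOrderedRing R] {W : Matrix ι ι R} (hW : Wᵀ = -W) : IsUnit (1 + W) := by
  refine mulVec_injective_iff_isUnit.mp ((injective_iff_map_eq_zero (1 + W).mulVecLin).mpr ?_)
  intro v (hv : (1 + W) *ᵥ v = 0)
  rw [← dotProduct_self_eq_zero]
  calc v ⬝ᵥ v = v ⬝ᵥ (1 + W) *ᵥ v := by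
        rw [add_mulVec, one_mulVec, dotProduct_add,
          dotProduct_mulVec_self_eq_zero_of_transpose_eq_neg hW, add_zero]
    _ = 0 := by rw [hv, dotProduct_zero]

end SkewSymmetric

theorem Matrix.cayley_mulVec_eq_of_mulVec_eq {ι K : Type*} [Fintype ι] [DecidableEq ι] [Field K]
    {W : Matrix ι ι K} (hW : IsUnit (1 + W)) {x y : ι → K} (h : (1 + W) *ᵥ y = (1 - W) *ᵥ x) :
    ((1 + W)⁻¹ * (1 - W)) *ᵥ x = y := by
  rw [← mulVec_mulVec, ← h, mulVec_mulVec, nonsing_inv_mul _ ((isUnit_iff_isUnit_det _).mp hW),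
    one_mulVec]

section RankTwo

variable {ι K : Type*} [Fintype ι] [Field K] {x p : ι → K}

theorem Matrix.vecMulVec_sub_vecMulVec_mulVec_left (hx : x ⬝ᵥ x = 1) (hxp : x ⬝ᵥ p = 0) :
    (vecMulVec p x - vecMulVec x p) *ᵥ x = p := by
  simp [sub_mulVec, vecMulVec_mulVec, hx, dotProduct_comm p x, hxp]

theorem Matrix.vecMulVec_sub_vecMulVec_mulVec_right (hxp : x ⬝ᵥ p = 0) :
    (vecMulVec p x - vecMulVec x p) *ᵥ p = -(p ⬝ᵥ p) • x := by
  simp [sub_mulVec, vecMulVec_mulVec, hxp]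

theorem Matrix.cayley_mulVec_of_mulVec_eq_smul [DecidableEq ι] {W : Matrix ι ι K}
    (hunit : IsUnit (1 + W)) {α s : K} (hs : 1 + α ^ 2 * s ≠ 0) (hWx : W *ᵥ x = α • p)
    (hWp : W *ᵥ p = -(α * s) • x) :
    ((1 + W)⁻¹ * (1 - W)) *ᵥ x = (1 + α ^ 2 * s)⁻¹ • ((1 - α ^ 2 * s) • x - (2 * α) • p) := by
  refine cayley_mulVec_eq_of_mulVec_eq hunit ?_
  simp only [add_mulVec, sub_mulVec, one_mulVec, mulVec_smul, mulVec_sub, hWx, hWp]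
  ext i
  simp only [Pi.add_apply, Pi.sub_apply, Pi.smul_apply, smul_eq_mul]
  field_simp
  ring

end RankTwo

theorem EuclideanSpace.dotProduct_eq_inner {ι : Type*} [Fintype ι] (x y : EuclideanSpace ℝ ι) :
    x.ofLp ⬝ᵥ y.ofLp = inner ℝ x y := by
  simp [EuclideanSpace.inner_eq_star_dotProduct, dotProduct_comm]

/-- for unit `x`, `p` with `xᵀp = 0`, `α ∈ ℝ`, and the skew-symmetric matrix
`W = a bᵀ − b aᵀ` with `a = x`, `b = −α p` (i.e. `W = −α x pᵀ + α p xᵀ`), the matrix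
`I + W` is invertible and the Cayley-transform update satisfies
`(I + W)⁻¹ (I − W) x = [(1 − α²‖p‖²) x − 2α p] / (1 + α²‖p‖²)`. -/
theorem cayley_transform_update
    {n : ℕ} (x p : EuclideanSpace ℝ (Fin n)) (hx : ‖x‖ = 1)
    (hxp : (inner ℝ x p : ℝ) = 0) (α : ℝ)
    (W : Matrix (Fin n) (Fin n) ℝ)
    (hW : W = -α • Matrix.vecMulVec x p + α • Matrix.vecMulVec p x) :
    IsUnit (1 + W) ∧
    Matrix.mulVec ((1 + W)⁻¹ * (1 - W)) x
      = fun i => ((1 - α ^ 2 * ‖p‖ ^ 2) * x i - 2 * α * p i) / (1 + α ^ 2 * ‖p‖ ^ 2) := by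
  have hW' : W = α • (vecMulVec p x - vecMulVec x p) := by rw [hW]; module
  have hskew : Wᵀ = -W := by
    rw [hW', transpose_smul, transpose_sub, transpose_vecMulVec, transpose_vecMulVec]; module
  have hunit := isUnit_one_add_of_transpose_eq_neg hskew
  have hxx : x.ofLp ⬝ᵥ x.ofLp = 1 := by
    rw [EuclideanSpace.dotProduct_eq_inner, real_inner_self_eq_norm_sq, hx, one_pow]
  have hpp : p.ofLp ⬝ᵥ p.ofLp = ‖p‖ ^ 2 := by
    rw [EuclideanSpace.dotProduct_eq_inner, real_inner_self_eq_norm_sq]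
  rw [← EuclideanSpace.dotProduct_eq_inner] at hxp
  have hWx : W *ᵥ x.ofLp = α • p.ofLp := by
    rw [hW', smul_mulVec, vecMulVec_sub_vecMulVec_mulVec_left hxx hxp]
  have hWp : W *ᵥ p.ofLp = -(α * ‖p‖ ^ 2) • x.ofLp := by
    rw [hW', smul_mulVec, vecMulVec_sub_vecMulVec_mulVec_right hxp, hpp, smul_smul, mul_neg]
  refine ⟨hunit, ?_⟩
  rw [cayley_mulVec_of_mulVec_eq_smul hunit (by positivity) hWx hWp]
  ext i
  simp only [Pi.smul_apply, Pi.sub_apply, smul_eq_mul]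
  ring
end

section
/- Let x, p ∈ ℝ^n with ‖x‖ = 1 and x^T p = 0, and for α ≥ 0 define x(α) = [ (1 − α²‖p‖²) x − 2α p ] / (1 + α²‖p‖²). Then ‖x(α) − x‖ = 2α‖p‖ / √(1 + α²‖p‖²). -/
/-! Since `x ⊥ p` and `‖x‖ = 1`, writing `t = α²‖p‖²` the displacement is
`x(α) - x = -(2t x + 2α p) / (1 + t)`, whose squared norm is, by Pythagoras,
`(4t² + 4t) / (1 + t)² = 4t / (1 + t)`. -/

open RealInnerProductSpace

variable {E : Type*} [NormedAddCommGroup E] [InnerProductSpace ℝ E]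

theorem norm_smul_add_smul_sq_of_inner_eq_zero {x p : E} (h : ⟪x, p⟫ = 0) (a b : ℝ) :
    ‖a • x + b • p‖ ^ 2 = a ^ 2 * ‖x‖ ^ 2 + b ^ 2 * ‖p‖ ^ 2 := by
  have h' : ⟪a • x, b • p⟫ = 0 := by rw [real_inner_smul_left, real_inner_smul_right, h]; ring
  rw [norm_add_sq_real, h', norm_smul, norm_smul, mul_pow, mul_pow, Real.norm_eq_abs,
    Real.norm_eq_abs, sq_abs, sq_abs]
  ring

theorem norm_curvilinear_sub_sq {x p : E} (hx : ‖x‖ = 1) (hxp : ⟪x, p⟫ = 0) (α : ℝ) :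
    ‖(1 / (1 + α ^ 2 * ‖p‖ ^ 2)) • ((1 - α ^ 2 * ‖p‖ ^ 2) • x - (2 * α) • p) - x‖ ^ 2 =
      (2 * α * ‖p‖) ^ 2 / (1 + α ^ 2 * ‖p‖ ^ 2) := by
  set t := α ^ 2 * ‖p‖ ^ 2
  have hpos : 0 < 1 + t := by positivity
  have hdiff : (1 / (1 + t)) • ((1 - t) • x - (2 * α) • p) - x =
      (1 + t)⁻¹ • ((-(2 * t)) • x + (-(2 * α)) • p) := by
    match_scalars
    · field_simp
      ring
    · field_simp
  rw [hdiff, norm_smul, mul_pow, norm_smul_add_smul_sq_of_inner_eq_zero hxp, hx, Real.norm_eq_abs,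
    sq_abs]
  field_simp
  ring

/-- for unit `x` and `p` with `xᵀp = 0`, the curve
`x(α) = [(1 − α²‖p‖²) x − 2α p] / (1 + α²‖p‖²)` satisfies, for `α ≥ 0`,
`‖x(α) − x‖ = 2α‖p‖ / √(1 + α²‖p‖²)`. -/
theorem curvilinear_step_length
    {n : ℕ} (x p : EuclideanSpace ℝ (Fin n)) (hx : ‖x‖ = 1)
    (hxp : (inner ℝ x p : ℝ) = 0)
    (xc : ℝ → EuclideanSpace ℝ (Fin n))
    (hxc : ∀ α : ℝ, xc α = (1 / (1 + α ^ 2 * ‖p‖ ^ 2)) •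
      ((1 - α ^ 2 * ‖p‖ ^ 2) • x - (2 * α) • p)) :
    ∀ α : ℝ, 0 ≤ α →
      ‖xc α - x‖ = 2 * α * ‖p‖ / Real.sqrt (1 + α ^ 2 * ‖p‖ ^ 2) := by
  intro α hα
  rw [← Real.sqrt_sq (norm_nonneg _), hxc, norm_curvilinear_sub_sq hx hxp,
    Real.sqrt_div' _ (by positivity), Real.sqrt_sq (by positivity)]
end

section
/- Let H and B be m-th order n-dimensional real symmetric tensors with m even and B positive definite (B x^m > 0 for all x ≠ 0), let f(x) = H x^m / B x^m with gradient g. Fix x ∈ ℝ^n with ‖x‖ = 1, set p = g(x), and define the curve x(α) = [ (1 − α²‖p‖²) x − 2α p ] / (1 + α²‖p‖²). Then the function α ↦ f(x(α)) is differentiable at α = 0 with derivative d f(x(α))/dα |_{α=0} = −2 ‖g(x)‖². -/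
/-- `A x^m` for an `m`-th order `n`-dimensional tensor `A`. -/
noncomputable def tpow {m n : ℕ} (A : (Fin m → Fin n) → ℝ) (x : EuclideanSpace ℝ (Fin n)) : ℝ :=
  ∑ g : Fin m → Fin n, A g * ∏ j, x (g j)

/-- A tensor is symmetric if its entries are invariant under index permutations. -/
def TensorSymmetric {m n : ℕ} (A : (Fin m → Fin n) → ℝ) : Prop :=
  ∀ (σ : Equiv.Perm (Fin m)) (g : Fin m → Fin n), A (g ∘ σ) = A g

/-! The curve passes through `x` at `α = 0` with velocity `-2 p`, and `f` is differentiable at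
`x` because `B x^m > 0` there, so by the chain rule the derivative is `⟪p, -2 p⟫ = -2 ‖p‖²`. -/

open RealInnerProductSpace

@[fun_prop]
theorem differentiable_tpow {m n : ℕ} (A : (Fin m → Fin n) → ℝ) :
    Differentiable ℝ (tpow A) := by
  unfold tpow
  fun_prop

theorem HasGradientAt.comp_hasDerivAt_of_eq {E : Type*} [NormedAddCommGroup E]
    [InnerProductSpace ℝ E] [CompleteSpace E] {f : E → ℝ} {f' x γ' : E} {γ : ℝ → E} {t : ℝ}
    (hf : HasGradientAt f f' x) (hγ : HasDerivAt γ γ' t) (hx : γ t = x) :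
    HasDerivAt (fun s => f (γ s)) ⟪f', γ'⟫ t :=
  hf.hasFDerivAt.comp_hasDerivAt_of_eq t hγ hx.symm

theorem hasDerivAt_curvilinearPath_zero {E : Type*} [NormedAddCommGroup E] [NormedSpace ℝ E]
    (x p : E) (c : ℝ) :
    HasDerivAt (fun α : ℝ => (1 / (1 + α ^ 2 * c)) • ((1 - α ^ 2 * c) • x - (2 * α) • p))
      ((-2 : ℝ) • p) 0 := by
  have hsq : HasDerivAt (fun α : ℝ => α ^ 2 * c) 0 0 := by
    simpa using (hasDerivAt_pow 2 (0 : ℝ)).mul_const c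
  have hscale : HasDerivAt (fun α : ℝ => 1 / (1 + α ^ 2 * c)) 0 0 := by
    simpa using (hsq.const_add 1).fun_inv (by simp)
  have hdir : HasDerivAt (fun α : ℝ => (1 - α ^ 2 * c) • x - (2 * α) • p) (-(2 : ℝ) • p) 0 := by
    simpa using ((hsq.const_sub 1).smul_const x).fun_sub
      (((hasDerivAt_id (0 : ℝ)).const_mul 2).smul_const p)
  simpa using hscale.fun_smul hdir

theorem curvilinear_derivative_at_zero_general
    {m n : ℕ}
    (H B : (Fin m → Fin n) → ℝ)
    (hBpd : ∀ z : EuclideanSpace ℝ (Fin n), z ≠ 0 → 0 < tpow B z)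
    (x : EuclideanSpace ℝ (Fin n)) (hx : ‖x‖ = 1)
    (p : EuclideanSpace ℝ (Fin n))
    (hp : p = gradient (fun y => tpow H y / tpow B y) x)
    (xc : ℝ → EuclideanSpace ℝ (Fin n))
    (hxc : ∀ α : ℝ, xc α = (1 / (1 + α ^ 2 * ‖p‖ ^ 2)) •
      ((1 - α ^ 2 * ‖p‖ ^ 2) • x - (2 * α) • p)) :
    HasDerivAt (fun α => tpow H (xc α) / tpow B (xc α))
      (-2 * ‖gradient (fun y => tpow H y / tpow B y) x‖ ^ 2) 0 := by
  have hx0 : x ≠ 0 := by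
    rintro rfl
    simp at hx
  have hdiff : DifferentiableAt ℝ (fun y => tpow H y / tpow B y) x := by
    fun_prop (disch := exact (hBpd x hx0).ne')
  have hf : HasGradientAt (fun y => tpow H y / tpow B y) p x := hp ▸ hdiff.hasGradientAt
  have hγ : HasDerivAt xc ((-2 : ℝ) • p) 0 :=
    funext hxc ▸ hasDerivAt_curvilinearPath_zero x p (‖p‖ ^ 2)
  have hγ0 : xc 0 = x := by simp [hxc]
  simpa [← hp, real_inner_smul_right, real_inner_self_eq_norm_sq]
    using hf.comp_hasDerivAt_of_eq hγ hγ0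

/-- for `m` even, `B` positive definite, `f(x) = H x^m / B x^m` with gradient
`g`, a unit vector `x`, `p = g(x)`, and the curve
`x(α) = [(1 − α²‖p‖²) x − 2α p] / (1 + α²‖p‖²)`, the function `α ↦ f(x(α))` is
differentiable at `α = 0` with derivative `−2‖g(x)‖²`. -/
theorem curvilinear_derivative_at_zero
    {m n : ℕ} (hm : Even m)
    (H B : (Fin m → Fin n) → ℝ)
    (hH : TensorSymmetric H) (hB : TensorSymmetric B)
    (hBpd : ∀ z : EuclideanSpace ℝ (Fin n), z ≠ 0 → 0 < tpow B z)
    (x : EuclideanSpace ℝ (Fin n)) (hx : ‖x‖ = 1)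
    (p : EuclideanSpace ℝ (Fin n))
    (hp : p = gradient (fun y => tpow H y / tpow B y) x)
    (xc : ℝ → EuclideanSpace ℝ (Fin n))
    (hxc : ∀ α : ℝ, xc α = (1 / (1 + α ^ 2 * ‖p‖ ^ 2)) •
      ((1 - α ^ 2 * ‖p‖ ^ 2) • x - (2 * α) • p)) :
    HasDerivAt (fun α => tpow H (xc α) / tpow B (xc α))
      (-2 * ‖gradient (fun y => tpow H y / tpow B y) x‖ ^ 2) 0 :=
  curvilinear_derivative_at_zero_general H B hBpd x hx p hp xc hxc
end

section
/- Let H and B be m-th order n-dimensional real symmetric tensors with m even and B positive definite (B x^m > 0 for all x ≠ 0), let f(x) = H x^m / B x^m with gradient g. Let η > 0, α_min > 0, and let {x_k} be a sequence of unit vectors satisfying the sufficient-decrease condition f(x_{k+1}) ≤ f(x_k) − η α_k ‖g(x_k)‖² with α_k ≥ α_min for all k. Then Σ_{k=1}^∞ ‖g(x_k)‖² < ∞, so lim_{k→∞} ‖g(x_k)‖ = 0; the sequence {x_k} has at least one accumulation point; and every accumulation point x_∞ of {x_k} satisfies H x_∞^{m−1} = λ_* B x_∞^{m−1} where λ_*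 = f(x_∞) = lim_{k→∞} f(x_k), i.e. x_∞ is a generalized eigenvector of (H, B) with generalized eigenvalue λ_*. -/
open Filter

/-- `A x^{m-1}`, the vector with `i`-th entry `Σ_{i₂,…,i_m} a_{i,i₂,…,i_m} x_{i₂}⋯x_{i_m}`. -/
noncomputable def tvec {m n : ℕ} (hm : 0 < m) (A : (Fin m → Fin n) → ℝ)
    (x : EuclideanSpace ℝ (Fin n)) : EuclideanSpace ℝ (Fin n) :=
  WithLp.toLp 2 <| fun i => ∑ g : Fin m → Fin n,
    if g ⟨0, hm⟩ = i then A g * ∏ j ∈ Finset.univ.erase ⟨0, hm⟩, x (g j) else 0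

/-!
The quotient `f` decreases by at least `η αmin ‖∇f(x_k)‖²` per step and is bounded below on the
compact unit sphere, where `B` is positive, so telescoping makes `∑ ‖∇f(x_k)‖²` finite. The values
`f(x_k)` decrease to their infimum and compactness of the sphere yields accumulation points.
Symmetry gives `∇f = (m / B x^m) • (H x^{m-1} - f • B x^{m-1})`, continuous wherever `B x^m ≠ 0`,
so the gradient vanishes at every accumulation point: the eigen-equation for `λ* = lim f(x_k)`.
-/

section TensorCalculus

variable {m n : ℕ}

theorem continuous_tpow (A : (Fin m → Fin n) → ℝ) : Continuous (tpow A) := by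
  unfold tpow
  fun_prop

theorem continuous_tvec (hm : 0 < m) (A : (Fin m → Fin n) → ℝ) : Continuous (tvec hm A) := by
  refine (PiLp.continuous_toLp 2 _).comp (continuous_pi fun i => ?_)
  refine continuous_finsetSum _ fun g _ => ?_
  split_ifs
  · fun_prop
  · exact continuous_const

theorem hasFDerivAt_tpow (A : (Fin m → Fin n) → ℝ) (x : EuclideanSpace ℝ (Fin n)) :
    HasFDerivAt (tpow A)
      (∑ g : Fin m → Fin n, A g • ∑ j : Fin m, (∏ j' ∈ Finset.univ.erase j, x (g j')) •
        PiLp.proj (𝕜 := ℝ) 2 (fun _ : Fin n => ℝ) (g j)) x :=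
  HasFDerivAt.fun_sum fun g _ =>
    (HasFDerivAt.finsetProd fun j _ => PiLp.hasFDerivAt_apply 2 x (g j)).const_mul (A g)

theorem TensorSymmetric.sum_prod_erase_mul_eq {A : (Fin m → Fin n) → ℝ}
    (hA : TensorSymmetric A) (x v : EuclideanSpace ℝ (Fin n)) (j₀ j : Fin m) :
    ∑ g : Fin m → Fin n, A g * ((∏ j' ∈ Finset.univ.erase j, x (g j')) * v (g j)) =
      ∑ g : Fin m → Fin n, A g * ((∏ j' ∈ Finset.univ.erase j₀, x (g j')) * v (g j₀)) := by
  refine Fintype.sum_equiv (Equiv.arrowCongr (Equiv.swap j₀ j) (Equiv.refl _)) _ _ fun g => ?_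
  have hg : Equiv.arrowCongr (Equiv.swap j₀ j) (Equiv.refl _) g = g ∘ Equiv.swap j₀ j := by
    ext a; simp
  have hprod : ∏ j' ∈ Finset.univ.erase j₀, x (g (Equiv.swap j₀ j j')) =
      ∏ j' ∈ Finset.univ.erase j, x (g j') :=
    Finset.prod_equiv (Equiv.swap j₀ j) (by simp [Equiv.swap_apply_eq_iff]) (by simp)
  rw [hg, hA, Function.comp_apply, Equiv.swap_apply_left]
  simp only [Function.comp_apply, hprod]

theorem sum_prod_erase_zero_mul_eq_inner (hm : 0 < m) (A : (Fin m → Fin n) → ℝ)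
    (x v : EuclideanSpace ℝ (Fin n)) :
    ∑ g : Fin m → Fin n,
        A g * ((∏ j' ∈ Finset.univ.erase ⟨0, hm⟩, x (g j')) * v (g ⟨0, hm⟩)) =
      inner ℝ (tvec hm A x) v := by
  simp only [tvec, PiLp.inner_apply, RCLike.inner_apply, conj_trivial, Finset.mul_sum]
  rw [Finset.sum_comm]
  refine Finset.sum_congr rfl fun g _ => ?_
  simp [mul_comm, mul_left_comm]

theorem TensorSymmetric.hasGradientAt_tpow (hm : 0 < m) {A : (Fin m → Fin n) → ℝ}
    (hA : TensorSymmetric A) (x : EuclideanSpace ℝ (Fin n)) :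
    HasGradientAt (tpow A) ((m : ℝ) • tvec hm A x) x := by
  rw [hasGradientAt_iff_hasFDerivAt]
  refine (hasFDerivAt_tpow A x).congr_fderiv (ContinuousLinearMap.ext fun v => ?_)
  simp only [InnerProductSpace.toDual_apply_apply, real_inner_smul_left, sum_apply, smul_apply,
    smul_eq_mul, PiLp.proj_apply, Finset.mul_sum, ← sum_prod_erase_zero_mul_eq_inner hm]
  rw [Finset.sum_comm]
  simp only [← Finset.mul_sum, hA.sum_prod_erase_mul_eq x v ⟨0, hm⟩, Finset.sum_const,
    Finset.card_univ, Fintype.card_fin, nsmul_eq_mul]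

end TensorCalculus

section RayleighQuotient

variable {m n : ℕ}

noncomputable def rayleighGradient (hm : 0 < m) (H B : (Fin m → Fin n) → ℝ)
    (y : EuclideanSpace ℝ (Fin n)) : EuclideanSpace ℝ (Fin n) :=
  ((m : ℝ) / tpow B y) • (tvec hm H y - (tpow H y / tpow B y) • tvec hm B y)

theorem hasGradientAt_rayleigh (hm : 0 < m) {H B : (Fin m → Fin n) → ℝ}
    (hH : TensorSymmetric H) (hB : TensorSymmetric B) {y : EuclideanSpace ℝ (Fin n)}
    (hy : tpow B y ≠ 0) :
    HasGradientAt (fun y => tpow H y / tpow B y) (rayleighGradient hm H B y) y := by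
  have hinv : HasFDerivAt (fun z => (tpow B z)⁻¹)
      ((-(tpow B y ^ 2)⁻¹) • InnerProductSpace.toDual ℝ _ ((m : ℝ) • tvec hm B y)) y :=
    (hasDerivAt_inv hy).comp_hasFDerivAt y (hB.hasGradientAt_tpow hm y).hasFDerivAt
  rw [hasGradientAt_iff_hasFDerivAt]
  simp only [div_eq_mul_inv]
  refine ((hH.hasGradientAt_tpow hm y).hasFDerivAt.mul hinv).congr_fderiv ?_
  simp only [rayleighGradient, map_sub, map_smul]
  module

theorem continuousAt_rayleigh (H B : (Fin m → Fin n) → ℝ) {y : EuclideanSpace ℝ (Fin n)}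
    (hy : tpow B y ≠ 0) : ContinuousAt (fun y => tpow H y / tpow B y) y :=
  (continuous_tpow H).continuousAt.div (continuous_tpow B).continuousAt hy

theorem continuousAt_rayleighGradient (hm : 0 < m) (H B : (Fin m → Fin n) → ℝ)
    {y : EuclideanSpace ℝ (Fin n)} (hy : tpow B y ≠ 0) :
    ContinuousAt (rayleighGradient hm H B) y := by
  have hH := (continuous_tpow H).continuousAt (x := y)
  have hB := (continuous_tpow B).continuousAt (x := y)
  exact (continuousAt_const.div hB hy).smul ((continuous_tvec hm H).continuousAt.sub
    ((hH.div hB hy).smul (continuous_tvec hm B).continuousAt))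

theorem tvec_eq_smul_of_rayleighGradient_eq_zero (hm : 0 < m) {H B : (Fin m → Fin n) → ℝ}
    {y : EuclideanSpace ℝ (Fin n)} (hy : tpow B y ≠ 0) (h : rayleighGradient hm H B y = 0) :
    tvec hm H y = (tpow H y / tpow B y) • tvec hm B y := by
  rw [rayleighGradient, smul_eq_zero, sub_eq_zero] at h
  exact h.resolve_left (div_ne_zero (Nat.cast_ne_zero.mpr hm.ne') hy)

theorem rayleighGradient_eq_zero_of_tendsto (hm : 0 < m) {H B : (Fin m → Fin n) → ℝ}
    (hH : TensorSymmetric H) (hB : TensorSymmetric B) {x : ℕ → EuclideanSpace ℝ (Fin n)}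
    {y : EuclideanSpace ℝ (Fin n)} (hxB : ∀ k, tpow B (x k) ≠ 0) (hy : tpow B y ≠ 0)
    (hx : Tendsto x atTop (nhds y))
    (hgrad : Tendsto (fun k => gradient (fun y => tpow H y / tpow B y) (x k)) atTop (nhds 0)) :
    rayleighGradient hm H B y = 0 :=
  tendsto_nhds_unique ((continuousAt_rayleighGradient hm H B hy).tendsto.comp hx)
    (hgrad.congr fun k => (hasGradientAt_rayleigh hm hH hB (hxB k)).gradient)

end RayleighQuotient

theorem summable_of_add_mul_le {u a : ℕ → ℝ} {ε : ℝ} (hε : 0 < ε) (ha : ∀ k, 0 ≤ a k)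
    (hu : BddBelow (Set.range u)) (hdec : ∀ k, u (k + 1) + ε * a k ≤ u k) : Summable a := by
  obtain ⟨c, hc⟩ := hu
  have htel : ∀ N, u N + ε * ∑ k ∈ Finset.range N, a k ≤ u 0 := by
    intro N
    induction N with
    | zero => simp
    | succ N ih => rw [Finset.sum_range_succ]; linarith [hdec N]
  refine summable_of_sum_range_le (c := (u 0 - c) / ε) ha fun N => ?_
  rw [le_div_iff₀' hε]
  linarith [htel N, hc ⟨N, rfl⟩]

theorem acsa_basic_convergence_general
    {m n : ℕ} (hm : 0 < m)
    (H B : (Fin m → Fin n) → ℝ)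
    (hH : TensorSymmetric H) (hB : TensorSymmetric B)
    (hBpd : ∀ z : EuclideanSpace ℝ (Fin n), z ≠ 0 → 0 < tpow B z)
    (η αmin : ℝ) (hη : 0 < η) (hαmin : 0 < αmin)
    (x : ℕ → EuclideanSpace ℝ (Fin n)) (α : ℕ → ℝ)
    (hunit : ∀ k, ‖x k‖ = 1)
    (hα : ∀ k, αmin ≤ α k)
    (hdec : ∀ k, tpow H (x (k + 1)) / tpow B (x (k + 1))
      ≤ tpow H (x k) / tpow B (x k)
        - η * α k * ‖gradient (fun y => tpow H y / tpow B y) (x k)‖ ^ 2) :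
    Summable (fun k => ‖gradient (fun y => tpow H y / tpow B y) (x k)‖ ^ 2) ∧
    Tendsto (fun k => ‖gradient (fun y => tpow H y / tpow B y) (x k)‖) atTop (nhds 0) ∧
    (∃ (xinf : EuclideanSpace ℝ (Fin n)) (φ : ℕ → ℕ), StrictMono φ ∧
      Tendsto (x ∘ φ) atTop (nhds xinf)) ∧
    (∀ xinf : EuclideanSpace ℝ (Fin n),
      (∃ φ : ℕ → ℕ, StrictMono φ ∧ Tendsto (x ∘ φ) atTop (nhds xinf)) →
      ∃ lam : ℝ,
        Tendsto (fun k => tpow H (x k) / tpow B (x k)) atTop (nhds lam) ∧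
        tpow H xinf / tpow B xinf = lam ∧
        ∀ i, tvec hm H xinf i = lam * tvec hm B xinf i) := by
  set f : EuclideanSpace ℝ (Fin n) → ℝ := fun y => tpow H y / tpow B y
  set S := Metric.sphere (0 : EuclideanSpace ℝ (Fin n)) 1
  have hxS : ∀ k, x k ∈ S := fun k => by simpa [S] using hunit k
  have hBS : ∀ y ∈ S, tpow B y ≠ 0 := fun y hy => (hBpd y (by rintro rfl; simp [S] at hy)).ne'
  have hbdd : BddBelow (Set.range fun k => f (x k)) :=
    ((isCompact_sphere 0 1).bddBelow_image (continuousOn_of_forall_continuousAt fun y hy =>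
      continuousAt_rayleigh H B (hBS y hy))).mono
      (Set.range_subset_iff.mpr fun k => Set.mem_image_of_mem f (hxS k))
  have hdescent : ∀ k, f (x (k + 1)) + η * αmin * ‖gradient f (x k)‖ ^ 2 ≤ f (x k) := fun k => by
    nlinarith [hdec k, hα k, mul_nonneg hη.le (sq_nonneg ‖gradient f (x k)‖)]
  have hsum := summable_of_add_mul_le (mul_pos hη hαmin) (fun k => sq_nonneg _) hbdd hdescent
  have hgrad : Tendsto (fun k => ‖gradient f (x k)‖) atTop (nhds 0) := by
    simpa using hsum.tendsto_atTop_zero.sqrt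
  have hf : Tendsto (fun k => f (x k)) atTop (nhds (⨅ k, f (x k))) :=
    tendsto_atTop_ciInf (antitone_nat_of_succ_le fun k => by
      linarith [hdescent k, mul_nonneg (mul_pos hη hαmin).le (sq_nonneg ‖gradient f (x k)‖)]) hbdd
  refine ⟨hsum, hgrad, ?_, ?_⟩
  · obtain ⟨xinf, -, φ, hφ, hconv⟩ := (isCompact_sphere 0 1).tendsto_subseq hxS
    exact ⟨xinf, φ, hφ, hconv⟩
  · rintro xinf ⟨φ, hφ, hconv⟩
    have hBxinf : tpow B xinf ≠ 0 :=
      hBS xinf (Metric.isClosed_sphere.mem_of_tendsto hconv (.of_forall fun k => hxS (φ k)))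
    have hfxinf : f xinf = ⨅ k, f (x k) := tendsto_nhds_unique
      ((continuousAt_rayleigh H B hBxinf).tendsto.comp hconv) (hf.comp hφ.tendsto_atTop)
    have hcrit := rayleighGradient_eq_zero_of_tendsto hm hH hB (fun k => hBS _ (hxS (φ k)))
      hBxinf hconv ((tendsto_zero_iff_norm_tendsto_zero.mpr hgrad).comp hφ.tendsto_atTop)
    refine ⟨_, hf, hfxinf, fun i => ?_⟩
    rw [← hfxinf, tvec_eq_smul_of_rayleighGradient_eq_zero hm hBxinf hcrit]
    rfl

/-- for a sequence of unit vectors satisfying the sufficient-decrease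
condition with step sizes bounded below, the gradients are square-summable (hence tend
to zero), the sequence has an accumulation point, and every accumulation point `xinf`
satisfies `H xinf^{m-1} = λ* B xinf^{m-1}` with `λ* = f(xinf) = lim f(x_k)`. -/
theorem acsa_basic_convergence
    {m n : ℕ} (hm : 0 < m) (hme : Even m)
    (H B : (Fin m → Fin n) → ℝ)
    (hH : TensorSymmetric H) (hB : TensorSymmetric B)
    (hBpd : ∀ z : EuclideanSpace ℝ (Fin n), z ≠ 0 → 0 < tpow B z)
    (η αmin : ℝ) (hη : 0 < η) (hαmin : 0 < αmin)
    (x : ℕ → EuclideanSpace ℝ (Fin n)) (α : ℕ → ℝ)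
    (hunit : ∀ k, ‖x k‖ = 1)
    (hα : ∀ k, αmin ≤ α k)
    (hdec : ∀ k, tpow H (x (k + 1)) / tpow B (x (k + 1))
      ≤ tpow H (x k) / tpow B (x k)
        - η * α k * ‖gradient (fun y => tpow H y / tpow B y) (x k)‖ ^ 2) :
    Summable (fun k => ‖gradient (fun y => tpow H y / tpow B y) (x k)‖ ^ 2) ∧
    Tendsto (fun k => ‖gradient (fun y => tpow H y / tpow B y) (x k)‖) atTop (nhds 0) ∧
    (∃ (xinf : EuclideanSpace ℝ (Fin n)) (φ : ℕ → ℕ), StrictMono φ ∧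
      Tendsto (x ∘ φ) atTop (nhds xinf)) ∧
    (∀ xinf : EuclideanSpace ℝ (Fin n),
      (∃ φ : ℕ → ℕ, StrictMono φ ∧ Tendsto (x ∘ φ) atTop (nhds xinf)) →
      ∃ lam : ℝ,
        Tendsto (fun k => tpow H (x k) / tpow B (x k)) atTop (nhds lam) ∧
        tpow H xinf / tpow B xinf = lam ∧
        ∀ i, tvec hm H xinf i = lam * tvec hm B xinf i) :=
  acsa_basic_convergence_general hm H B hH hB hBpd η αmin hη hαmin x α hunit hα hdec
end

section
/- Let f : ℝ^n → ℝ be continuously differentiable, let x_* be a critical point of f, and suppose f satisfies the Kurdyka–Łojasiewicz inequality at x_*: there are a neighborhood U of x_*, an exponent θ ∈ (0,1), and a constant C₁ > 0 such that |f(x) − f(x_*)|^θ ≤ C₁ ‖∇f(x)‖ for all x ∈ U. Let η > 0 and let {x_k} be a sequence with f(x_k) ≥ f(x_*) for all k, satisfying for each k the sufficient decrease f(x_{k+1}) ≤ f(x_k) − η α_k ‖∇f(x_k)‖² and the step-length identity ‖x_{k+1} − x_k‖ = 2 α_k ‖∇f(x_k)‖ / √(1 + α_k² ‖∇f(x_k)‖²)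 for some α_k > 0. If the open ball B(x_*, ρ) is contained in U where ρ > (2C₁/(η(1−θ))) |f(x_1) − f(x_*)|^{1−θ} + ‖x_1 − x_*‖ and x_1 ∈ B(x_*, ρ), then every iterate satisfies x_k ∈ B(x_*, ρ), and the sequence has finite length with Σ_{k=1}^∞ ‖x_{k+1} − x_k‖ ≤ (2C₁/(η(1−θ))) |f(x_1) − f(x_*)|^{1−θ}. -/
/-!
Along the iteration the potential `V k = K (f(x_k) - f(x⋆))^(1-θ)`, `K = 2C₁/(η(1-θ))`,
dominates the remaining path length. While `x_k` lies in the KL region, concavity of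
`t ↦ t^(1-θ)` turns the sufficient decrease and the KL inequality into
`‖x_{k+1} - x_k‖ ≤ 2 α_k ‖∇f(x_k)‖ ≤ V k - V (k+1)`. Telescoping bounds the distance
travelled from `x_0` by `V 0`, and the choice of `ρ` keeps every iterate in the ball, hence in the KL
region, so the induction never stops.
-/

open Metric

/-- The tangent-line inequality for the concave function `t ↦ t ^ p` at `a`. -/
theorem mul_sub_mul_rpow_sub_one_le_rpow_sub_rpow {a b p : ℝ} (hb : 0 ≤ b) (ha : 0 < a)
    (hp0 : 0 ≤ p) (hp1 : p ≤ 1) :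
    p * (a - b) * a ^ (p - 1) ≤ a ^ p - b ^ p := by
  have hbern : (b / a) ^ p ≤ 1 + p * (b / a - 1) := by
    simpa using rpow_one_add_le_one_add_mul_self
      (by linarith [div_nonneg hb ha.le] : (-1 : ℝ) ≤ b / a - 1) hp0 hp1
  have hb_eq : b ^ p = (b / a) ^ p * a ^ p := by
    rw [← Real.mul_rpow (div_nonneg hb ha.le) ha.le, div_mul_cancel₀ _ ha.ne']
  have hap : 0 < a ^ p := Real.rpow_pos_of_pos ha p
  calc p * (a - b) * a ^ (p - 1) = a ^ p - (1 + p * (b / a - 1)) * a ^ p := by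
        rw [Real.rpow_sub ha, Real.rpow_one]; field_simp; ring
    _ ≤ a ^ p - b ^ p := by
        rw [hb_eq]; exact sub_le_sub_left (mul_le_mul_of_nonneg_right hbern hap.le) _

/-- `a`, `b` are consecutive gaps `f(x_k) - f(x⋆)`, `g = ‖∇f(x_k)‖` and `t = α_k`. -/
theorem mul_le_of_kl_of_sufficient_decrease {θ C η t g a b : ℝ} (hθ0 : 0 ≤ θ) (hθ1 : θ < 1)
    (hC : 0 < C) (hη : 0 < η) (ht : 0 < t) (hb : 0 ≤ b)
    (hKL : a ^ θ ≤ C * g) (hdec : b ≤ a - η * t * g ^ 2) :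
    t * g ≤ C / (η * (1 - θ)) * (a ^ (1 - θ) - b ^ (1 - θ)) := by
  have hdrop : 0 ≤ η * t * g ^ 2 := by positivity
  rcases (show 0 ≤ a by linarith).eq_or_lt with rfl | ha
  · have hg : g = 0 := by
      have : η * t * g ^ 2 = 0 := by linarith
      simpa [hη.ne', ht.ne'] using this
    have hb0 : b = 0 := by linarith
    simp [hg, hb0]
  have hg : 0 < g := pos_of_mul_pos_right ((Real.rpow_pos_of_pos ha θ).trans_le hKL) hC.le
  have hθ' : 0 < 1 - θ := by linarith
  have hconc := mul_sub_mul_rpow_sub_one_le_rpow_sub_rpow hb ha hθ'.le (by linarith)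
  rw [show 1 - θ - 1 = -θ by ring, Real.rpow_neg ha.le] at hconc
  have hinv : (C * g)⁻¹ ≤ (a ^ θ)⁻¹ := inv_anti₀ (Real.rpow_pos_of_pos ha θ) hKL
  have hab : η * t * g ^ 2 ≤ a - b := by linarith
  calc t * g = C / (η * (1 - θ)) * ((1 - θ) * (η * t * g ^ 2) * (C * g)⁻¹) := by
        field_simp
    _ ≤ C / (η * (1 - θ)) * ((1 - θ) * (a - b) * (a ^ θ)⁻¹) := by
        gcongr
        exact mul_nonneg hθ'.le (hdrop.trans hab)
    _ ≤ C / (η * (1 - θ)) * (a ^ (1 - θ) - b ^ (1 - θ)) := by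
        gcongr

theorem div_sqrt_one_add_le_self {a b : ℝ} (ha : 0 ≤ a) (hb : 0 ≤ b) : a / √(1 + b) ≤ a :=
  div_le_self ha (Real.one_le_sqrt.2 (by linarith))

section Trapping

variable {X : Type*} [PseudoMetricSpace X] {x : ℕ → X} {c : X} {ρ : ℝ} {V : ℕ → ℝ}

theorem mem_ball_and_sum_range_dist_le_of_dist_le_sub (hV : ∀ k, 0 ≤ V k)
    (hstep : ∀ k, x k ∈ ball c ρ → dist (x (k + 1)) (x k) ≤ V k - V (k + 1))
    (h0 : V 0 + dist (x 0) c < ρ) (N : ℕ) :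
    x N ∈ ball c ρ ∧ ∑ k ∈ Finset.range N, dist (x (k + 1)) (x k) ≤ V 0 - V N := by
  induction N with
  | zero => simpa using (le_add_of_nonneg_left (hV 0)).trans_lt h0
  | succ N ih =>
    obtain ⟨hmem, hsum⟩ := ih
    have hsum' : ∑ k ∈ Finset.range (N + 1), dist (x (k + 1)) (x k) ≤ V 0 - V (N + 1) := by
      rw [Finset.sum_range_succ]
      linarith [hstep N hmem]
    refine ⟨?_, hsum'⟩
    have htravel : dist (x (N + 1)) (x 0) ≤
        ∑ k ∈ Finset.range (N + 1), dist (x (k + 1)) (x k) := by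
      simpa only [dist_comm] using dist_le_range_sum_dist x (N + 1)
    rw [mem_ball]
    linarith [dist_triangle (x (N + 1)) (x 0) c, hV (N + 1)]

theorem mem_ball_and_tsum_dist_le_of_dist_le_sub (hV : ∀ k, 0 ≤ V k)
    (hstep : ∀ k, x k ∈ ball c ρ → dist (x (k + 1)) (x k) ≤ V k - V (k + 1))
    (h0 : V 0 + dist (x 0) c < ρ) :
    (∀ k, x k ∈ ball c ρ) ∧ Summable (fun k => dist (x (k + 1)) (x k)) ∧
      ∑' k, dist (x (k + 1)) (x k) ≤ V 0 := by
  have hpartial := mem_ball_and_sum_range_dist_le_of_dist_le_sub hV hstep h0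
  have hbdd : ∀ N, ∑ k ∈ Finset.range N, dist (x (k + 1)) (x k) ≤ V 0 :=
    fun N => (hpartial N).2.trans (sub_le_self _ (hV N))
  exact ⟨fun k => (hpartial k).1, summable_of_sum_range_le (fun _ => dist_nonneg) hbdd,
    Real.tsum_le_of_sum_range_le (fun _ => dist_nonneg) hbdd⟩

end Trapping

theorem kl_finite_length_general
    {n : ℕ} (f : EuclideanSpace ℝ (Fin n) → ℝ)
    (xstar : EuclideanSpace ℝ (Fin n))
    (U : Set (EuclideanSpace ℝ (Fin n)))
    (θ C₁ : ℝ) (hθ : θ ∈ Set.Ioo (0 : ℝ) 1) (hC₁ : 0 < C₁)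
    (hKL : ∀ y ∈ U, |f y - f xstar| ^ θ ≤ C₁ * ‖gradient f y‖)
    (η : ℝ) (hη : 0 < η)
    (x : ℕ → EuclideanSpace ℝ (Fin n)) (α : ℕ → ℝ)
    (hxf : ∀ k, f xstar ≤ f (x k))
    (hαpos : ∀ k, 0 < α k)
    (hdec : ∀ k, f (x (k + 1)) ≤ f (x k) - η * α k * ‖gradient f (x k)‖ ^ 2)
    (hstep : ∀ k, ‖x (k + 1) - x k‖
      = 2 * α k * ‖gradient f (x k)‖
          / Real.sqrt (1 + (α k) ^ 2 * ‖gradient f (x k)‖ ^ 2))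
    (ρ : ℝ)
    (hρ : 2 * C₁ / (η * (1 - θ)) * |f (x 0) - f xstar| ^ (1 - θ) + ‖x 0 - xstar‖ < ρ)
    (hball : Metric.ball xstar ρ ⊆ U) :
    (∀ k, x k ∈ Metric.ball xstar ρ) ∧
    Summable (fun k => ‖x (k + 1) - x k‖) ∧
    ∑' k, ‖x (k + 1) - x k‖
      ≤ 2 * C₁ / (η * (1 - θ)) * |f (x 0) - f xstar| ^ (1 - θ) := by
  set V : ℕ → ℝ := fun k => 2 * C₁ / (η * (1 - θ)) * |f (x k) - f xstar| ^ (1 - θ)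
  have hgap : ∀ k, |f (x k) - f xstar| = f (x k) - f xstar :=
    fun k => abs_of_nonneg (sub_nonneg.2 (hxf k))
  have hV : ∀ k, 0 ≤ V k := fun k => by
    have : 0 < 1 - θ := by linarith [hθ.2]
    positivity
  have hpay : ∀ k, x k ∈ ball xstar ρ → dist (x (k + 1)) (x k) ≤ V k - V (k + 1) := by
    intro k hk
    have hKLk := hKL (x k) (hball hk)
    rw [hgap] at hKLk
    have hdesc := mul_le_of_kl_of_sufficient_decrease hθ.1.le hθ.2 hC₁ hη (hαpos k)
      (sub_nonneg.2 (hxf (k + 1))) hKLk (by linarith [hdec k])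
    have hlen : ‖x (k + 1) - x k‖ ≤ 2 * α k * ‖gradient f (x k)‖ := by
      rw [hstep k]
      exact div_sqrt_one_add_le_self (by have := hαpos k; positivity) (by positivity)
    have hVdiff : V k - V (k + 1) = 2 * (C₁ / (η * (1 - θ)) *
        ((f (x k) - f xstar) ^ (1 - θ) - (f (x (k + 1)) - f xstar) ^ (1 - θ))) := by
      simp only [V, hgap]; ring
    rw [dist_eq_norm, hVdiff]
    linarith
  simpa only [dist_eq_norm] using
    mem_ball_and_tsum_dist_le_of_dist_le_sub hV hpay (by rwa [dist_eq_norm])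

/-- under the Kurdyka–Łojasiewicz inequality at a critical point `x⋆`, a
sequence satisfying the sufficient-decrease condition and the curvilinear step-length
identity, starting in a suitable ball around `x⋆`, stays in that ball and has finite
length, with `Σ ‖x_{k+1} − x_k‖ ≤ (2C₁/(η(1−θ))) |f(x₁) − f(x⋆)|^{1−θ}`. -/
theorem kl_finite_length
    {n : ℕ} (f : EuclideanSpace ℝ (Fin n) → ℝ)
    (hf : ContDiff ℝ 1 f)
    (xstar : EuclideanSpace ℝ (Fin n))
    (hcrit : gradient f xstar = 0)
    (U : Set (EuclideanSpace ℝ (Fin n))) (hU : U ∈ nhds xstar)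
    (θ C₁ : ℝ) (hθ : θ ∈ Set.Ioo (0 : ℝ) 1) (hC₁ : 0 < C₁)
    (hKL : ∀ y ∈ U, |f y - f xstar| ^ θ ≤ C₁ * ‖gradient f y‖)
    (η : ℝ) (hη : 0 < η)
    (x : ℕ → EuclideanSpace ℝ (Fin n)) (α : ℕ → ℝ)
    (hxf : ∀ k, f xstar ≤ f (x k))
    (hαpos : ∀ k, 0 < α k)
    (hdec : ∀ k, f (x (k + 1)) ≤ f (x k) - η * α k * ‖gradient f (x k)‖ ^ 2)
    (hstep : ∀ k, ‖x (k + 1) - x k‖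
      = 2 * α k * ‖gradient f (x k)‖
          / Real.sqrt (1 + (α k) ^ 2 * ‖gradient f (x k)‖ ^ 2))
    (ρ : ℝ)
    (hρ : 2 * C₁ / (η * (1 - θ)) * |f (x 0) - f xstar| ^ (1 - θ) + ‖x 0 - xstar‖ < ρ)
    (hball : Metric.ball xstar ρ ⊆ U)
    (hx0 : x 0 ∈ Metric.ball xstar ρ) :
    (∀ k, x k ∈ Metric.ball xstar ρ) ∧
    Summable (fun k => ‖x (k + 1) - x k‖) ∧
    ∑' k, ‖x (k + 1) - x k‖
      ≤ 2 * C₁ / (η * (1 - θ)) * |f (x 0) - f xstar| ^ (1 - θ) :=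
  kl_finite_length_general f xstar U θ C₁ hθ hC₁ hKL η hη x α hxf hαpos hdec hstep ρ hρ hball
end

section
/- Let f : ℝ^n → ℝ be continuously differentiable, let η > 0, and let {x_k} be a sequence contained in a compact set, satisfying for each k the sufficient decrease f(x_{k+1}) ≤ f(x_k) − η α_k ‖∇f(x_k)‖² and the step-length identity ‖x_{k+1} − x_k‖ = 2 α_k ‖∇f(x_k)‖ / √(1 + α_k² ‖∇f(x_k)‖²) with α_k ≥ α_min > 0. Suppose x_* is an accumulation point of {x_k} (hence a critical point with f(x_k) ↓ f(x_*)) and f satisfies the Kurdyka–Łojasiewicz inequality at x_*: there are a neighborhood U of x_*, θ ∈ (0,1), and C₁ > 0 with |f(x) − f(x_*)|^θ ≤ C₁ ‖∇f(x)‖ for all x ∈ U. Then the whole sequence has finite length, Σ_{k=1}^∞ ‖x_{k+1} − x_k‖ < ∞, and {x_k} converges to the unique critical point x_*. -/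
/-!
Sufficient decrease makes `f ∘ x` antitone, so the subsequence converging to `x⋆` forces the gap
`r k = f (x k) - f x⋆` to decrease to `0`. Where `x k` lies in the KL neighbourhood, concavity of
`t ↦ t ^ (1 - θ)`, the KL inequality `r k ^ θ ≤ C₁ ‖∇f (x k)‖` and sufficient decrease bound the
step `‖x (k+1) - x k‖ ≤ 2 α k ‖∇f (x k)‖` by `Φ k - Φ (k+1)`, where
`Φ = 2 C₁ / (η (1 - θ)) • r ^ (1 - θ)`.
Starting from an iterate close to `x⋆` at which `Φ` is already small, these bounds telescope, so the
iterates never leave the neighbourhood; hence the step lengths are summable, the sequence is Cauchy,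
and its limit is the cluster point `x⋆`.
-/

open Filter Finset Metric Topology

theorem Real.mul_rpow_sub_one_mul_sub_le_rpow_sub_rpow {a b p : ℝ} (hb : 0 ≤ b) (hba : b ≤ a)
    (hp₀ : 0 ≤ p) (hp₁ : p ≤ 1) :
    p * a ^ (p - 1) * (a - b) ≤ a ^ p - b ^ p := by
  rcases hba.eq_or_lt with rfl | hba
  · simp
  have hconv : ConvexOn ℝ (Set.Ici 0) fun t : ℝ => -t ^ p := (Real.concaveOn_rpow hp₀ hp₁).neg
  have hderiv : HasDerivAt (fun t : ℝ => -t ^ p) (-(p * a ^ (p - 1))) a :=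
    (Real.hasDerivAt_rpow_const (Or.inl (hb.trans_lt hba).ne')).neg
  have hslope := hconv.slope_le_of_hasDerivAt hb (hb.trans hba.le) hba hderiv
  rw [slope_def_field, div_le_iff₀ (sub_pos.2 hba)] at hslope
  linarith

theorem le_mul_rpow_sub_rpow_of_kl {r r' s g a η C θ : ℝ} (hr' : 0 ≤ r') (ha : 0 < a)
    (hη : 0 < η) (hC : 0 ≤ C) (hθ₀ : 0 ≤ θ) (hθ₁ : θ < 1) (hg : 0 ≤ g)
    (hdec : η * a * g ^ 2 ≤ r - r') (hs : s ≤ 2 * a * g) (hkl : r ^ θ ≤ C * g) :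
    s ≤ 2 * C / (η * (1 - θ)) * (r ^ (1 - θ) - r' ^ (1 - θ)) := by
  have hp : 0 < 1 - θ := by linarith
  have hr'r : r' ≤ r := by nlinarith [mul_pos hη ha]
  rcases hg.eq_or_lt with rfl | hg
  · have : r' ^ (1 - θ) ≤ r ^ (1 - θ) := Real.rpow_le_rpow hr' hr'r hp.le
    have : 0 ≤ 2 * C / (η * (1 - θ)) := by positivity
    nlinarith
  have hr : 0 < r := by nlinarith [mul_pos (mul_pos hη ha) (pow_pos hg 2)]
  have hrθ : 0 < r ^ θ := Real.rpow_pos_of_pos hr θ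
  have hkl' : η * r ^ θ * (2 * a * g) ≤ 2 * C * (r - r') := by
    nlinarith [mul_le_mul_of_nonneg_left hkl (by positivity : 0 ≤ 2 * η * a * g)]
  have htangent := Real.mul_rpow_sub_one_mul_sub_le_rpow_sub_rpow hr' hr'r hp.le (by linarith)
  rw [show 1 - θ - 1 = -θ by ring, Real.rpow_neg hr.le] at htangent
  calc s ≤ 2 * a * g := hs
    _ ≤ 2 * C / (η * (1 - θ)) * ((1 - θ) * (r ^ θ)⁻¹ * (r - r')) := by
      rw [show 2 * C / (η * (1 - θ)) * ((1 - θ) * (r ^ θ)⁻¹ * (r - r'))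
          = 2 * C * (r - r') / (η * r ^ θ) by field_simp]
      rw [le_div_iff₀ (by positivity)]
      linarith
    _ ≤ _ := by gcongr

section Lyapunov

variable {X : Type*} [PseudoMetricSpace X] {x : ℕ → X} {Φ : ℕ → ℝ} {c : X}

theorem mem_ball_and_sum_dist_le_of_dist_le_sub {ε : ℝ} {N : ℕ} (hΦ : ∀ k, 0 ≤ Φ k)
    (hstep : ∀ k, x k ∈ ball c ε → dist (x k) (x (k + 1)) ≤ Φ k - Φ (k + 1))
    (hN : dist (x N) c + Φ N < ε) (m : ℕ) :
    x (m + N) ∈ ball c ε ∧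
      ∑ i ∈ range m, dist (x (i + N)) (x (i + 1 + N)) ≤ Φ N - Φ (m + N) := by
  induction m with
  | zero =>
    simp only [zero_add, mem_ball, range_zero, sum_empty, sub_self, le_refl, and_true]
    linarith [hΦ N]
  | succ m ih =>
    have hsum :
        ∑ i ∈ range (m + 1), dist (x (i + N)) (x (i + 1 + N)) ≤ Φ N - Φ (m + 1 + N) := by
      have := hstep _ ih.1
      rw [add_right_comm] at this
      rw [sum_range_succ]
      linarith [ih.2]
    refine ⟨?_, hsum⟩
    have hlen := dist_le_range_sum_dist (fun i => x (i + N)) (m + 1)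
    simp only [zero_add] at hlen
    rw [mem_ball]
    linarith [dist_triangle_left (x (m + 1 + N)) c (x N), hΦ (m + 1 + N)]

theorem summable_dist_of_dist_le_sub {U : Set X} (hU : U ∈ 𝓝 c) (hΦ : ∀ k, 0 ≤ Φ k)
    (hΦlim : Tendsto Φ atTop (𝓝 0))
    (hstep : ∀ k, x k ∈ U → dist (x k) (x (k + 1)) ≤ Φ k - Φ (k + 1))
    (hc : MapClusterPt c atTop x) :
    Summable fun k => dist (x k) (x (k + 1)) := by
  obtain ⟨ε, hε, hεU⟩ := Metric.mem_nhds_iff.1 hU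
  obtain ⟨N, hxN, hΦN⟩ := ((hc.frequently (ball_mem_nhds c (half_pos hε))).and_eventually
    (hΦlim.eventually (gt_mem_nhds (half_pos hε)))).exists
  have hN : dist (x N) c + Φ N < ε := by linarith
  rw [← summable_nat_add_iff N]
  refine summable_of_sum_range_le (c := Φ N) (fun _ => dist_nonneg) fun m => ?_
  have := (mem_ball_and_sum_dist_le_of_dist_le_sub hΦ (fun k hk => hstep k (hεU hk)) hN m).2
  simp only [add_right_comm _ 1 N] at this
  linarith [hΦ (m + N)]

end Lyapunov

theorem kl_global_convergence_general
    {n : ℕ} (f : EuclideanSpace ℝ (Fin n) → ℝ)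
    (hf : ContDiff ℝ 1 f)
    (η αmin : ℝ) (hη : 0 < η) (hαmin : 0 < αmin)
    (x : ℕ → EuclideanSpace ℝ (Fin n)) (α : ℕ → ℝ)
    (hα : ∀ k, αmin ≤ α k)
    (hdec : ∀ k, f (x (k + 1)) ≤ f (x k) - η * α k * ‖gradient f (x k)‖ ^ 2)
    (hstep : ∀ k, ‖x (k + 1) - x k‖
      = 2 * α k * ‖gradient f (x k)‖
          / Real.sqrt (1 + (α k) ^ 2 * ‖gradient f (x k)‖ ^ 2))
    (xstar : EuclideanSpace ℝ (Fin n))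
    (haccum : ∃ φ : ℕ → ℕ, StrictMono φ ∧ Tendsto (x ∘ φ) atTop (nhds xstar))
    (U : Set (EuclideanSpace ℝ (Fin n))) (hU : U ∈ nhds xstar)
    (θ C₁ : ℝ) (hθ : θ ∈ Set.Ioo (0 : ℝ) 1) (hC₁ : 0 < C₁)
    (hKL : ∀ y ∈ U, |f y - f xstar| ^ θ ≤ C₁ * ‖gradient f y‖) :
    Summable (fun k => ‖x (k + 1) - x k‖) ∧
    Tendsto x atTop (nhds xstar) := by
  obtain ⟨φ, hφ, hxφ⟩ := haccum
  have hαpos : ∀ k, 0 < α k := fun k => hαmin.trans_le (hα k)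
  have hmono : Antitone (f ∘ x) := antitone_nat_of_succ_le fun k =>
    (hdec k).trans (sub_le_self _ (by have := hαpos k; positivity))
  have hlim : Tendsto (f ∘ x) atTop (𝓝 (f xstar)) :=
    (tendsto_iff_tendsto_subseq_of_antitone hmono hφ.tendsto_atTop).2
      ((hf.continuous.tendsto xstar).comp hxφ)
  have hgap : ∀ k, 0 ≤ f (x k) - f xstar := fun k => sub_nonneg.2 (hmono.le_of_tendsto hlim k)
  set Φ : ℕ → ℝ := fun k => 2 * C₁ / (η * (1 - θ)) * (f (x k) - f xstar) ^ (1 - θ) with hΦ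
  have hΦ₀ : ∀ k, 0 ≤ Φ k := fun k => by
    have := hgap k; have := sub_pos.2 hθ.2; positivity
  have hΦlim : Tendsto Φ atTop (𝓝 0) := by
    have := ((Real.continuousAt_rpow_const 0 (1 - θ) (Or.inr (sub_pos.2 hθ.2).le)).tendsto.comp
      (tendsto_sub_nhds_zero_iff.2 hlim)).const_mul (2 * C₁ / (η * (1 - θ)))
    simpa [Real.zero_rpow (sub_pos.2 hθ.2).ne'] using this
  have hΦstep : ∀ k, x k ∈ U → dist (x k) (x (k + 1)) ≤ Φ k - Φ (k + 1) := fun k hk => by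
    rw [hΦ, ← mul_sub, dist_comm, dist_eq_norm, hstep k]
    refine le_mul_rpow_sub_rpow_of_kl (hgap (k + 1)) (hαpos k) hη hC₁.le hθ.1.le hθ.2
      (norm_nonneg _) (by linarith [hdec k]) ?_ ?_
    · exact div_le_self (by have := hαpos k; positivity)
        (Real.one_le_sqrt.2 (le_add_of_nonneg_right (by positivity)))
    · simpa [abs_of_nonneg (hgap k)] using hKL _ hk
  have hsum := summable_dist_of_dist_le_sub hU hΦ₀ hΦlim hΦstep
    (hxφ.mapClusterPt.of_comp hφ.tendsto_atTop)
  exact ⟨by simpa [dist_eq_norm'] using hsum,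
    tendsto_nhds_of_cauchySeq_of_subseq (cauchySeq_of_summable_dist hsum) hφ.tendsto_atTop hxφ⟩

/-- a sequence in a compact set satisfying sufficient decrease and the
curvilinear step-length identity with step sizes bounded below, having an accumulation
point `x⋆` at which `f` satisfies the Kurdyka–Łojasiewicz inequality, has finite length
and converges to the unique critical point `x⋆`. -/
theorem kl_global_convergence
    {n : ℕ} (f : EuclideanSpace ℝ (Fin n) → ℝ)
    (hf : ContDiff ℝ 1 f)
    (η αmin : ℝ) (hη : 0 < η) (hαmin : 0 < αmin)
    (x : ℕ → EuclideanSpace ℝ (Fin n)) (α : ℕ → ℝ)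
    (K : Set (EuclideanSpace ℝ (Fin n))) (hK : IsCompact K) (hxK : ∀ k, x k ∈ K)
    (hα : ∀ k, αmin ≤ α k)
    (hdec : ∀ k, f (x (k + 1)) ≤ f (x k) - η * α k * ‖gradient f (x k)‖ ^ 2)
    (hstep : ∀ k, ‖x (k + 1) - x k‖
      = 2 * α k * ‖gradient f (x k)‖
          / Real.sqrt (1 + (α k) ^ 2 * ‖gradient f (x k)‖ ^ 2))
    (xstar : EuclideanSpace ℝ (Fin n))
    (haccum : ∃ φ : ℕ → ℕ, StrictMono φ ∧ Tendsto (x ∘ φ) atTop (nhds xstar))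
    (U : Set (EuclideanSpace ℝ (Fin n))) (hU : U ∈ nhds xstar)
    (θ C₁ : ℝ) (hθ : θ ∈ Set.Ioo (0 : ℝ) 1) (hC₁ : 0 < C₁)
    (hKL : ∀ y ∈ U, |f y - f xstar| ^ θ ≤ C₁ * ‖gradient f y‖) :
    Summable (fun k => ‖x (k + 1) - x k‖) ∧
    Tendsto x atTop (nhds xstar) :=
  kl_global_convergence_general f hf η αmin hη hαmin x α hα hdec hstep xstar haccum U hU θ C₁ hθ hC₁
    hKL
end

section
/- Let f : ℝ^n → ℝ be continuously differentiable, η > 0, and let {x_k} be a sequence converging to a critical point x_* with f(x_k) ≥ f(x_*) for all k, satisfying for each k the sufficient decrease f(x_{k+1}) ≤ f(x_k) − η α_k ‖∇f(x_k)‖², the step-length identity ‖x_{k+1} − x_k‖ = 2 α_k ‖∇f(x_k)‖ / √(1 + α_k² ‖∇f(x_k)‖²), the step-size bounds 0 < α_min ≤ α_k ≤ α_max, and the gradient bound ‖∇f(x_k)‖ ≤ M. Suppose f satisfies the Kurdyka–Łojasiewicz inequality at x_* with exponent θ ∈ (0, 1/2]: there are a neighborhood U of x_* containing all x_k and a constant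 C₁ > 0 with |f(x) − f(x_*)|^θ ≤ C₁ ‖∇f(x)‖ for all x ∈ U. Then the sequence converges at least R-linearly: there exist γ > 0 and ϱ ∈ (0,1) such that ‖x_k − x_*‖ ≤ γ ϱ^k for all k. -/
/-!
Write `e k = f (x k) - f x⋆` and `g k = ‖∇f (x k)‖`. Since `e` is nonincreasing it is bounded by
`e 0`, so on that range the Kurdyka–Łojasiewicz inequality with `θ ≤ 1/2` upgrades to the error
bound `e k ≤ K (g k)²`. Together with the sufficient decrease `e (k+1) ≤ e k - a (g k)²` this makes
`e` contract by the fixed factor `K / (a + K)`, hence `e`, and with it `g` and the step lengths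
`‖x (k+1) - x k‖ ≤ 2 αmax g k`, decay geometrically; summing the tail of the steps bounds
`‖x k - x⋆‖`.
-/

open Filter Set

lemma le_rpow_one_sub_mul_rpow {t E p : ℝ} (ht : 0 ≤ t) (htE : t ≤ E) (hp : p ≤ 1) :
    t ≤ E ^ (1 - p) * t ^ p := by
  rcases ht.eq_or_lt with rfl | ht
  · exact mul_nonneg (Real.rpow_nonneg htE _) (Real.rpow_nonneg le_rfl _)
  calc t = t ^ (1 - p) * t ^ p := by rw [← Real.rpow_add ht, sub_add_cancel, Real.rpow_one]
    _ ≤ E ^ (1 - p) * t ^ p := by gcongr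

lemma le_mul_sq_of_rpow_le_mul {t s E C θ : ℝ} (ht : 0 ≤ t) (htE : t ≤ E) (hθ : θ ≤ 1 / 2)
    (hts : t ^ θ ≤ C * s) : t ≤ C ^ 2 * E ^ (1 - 2 * θ) * s ^ 2 := by
  have hE : 0 ≤ E ^ (1 - 2 * θ) := Real.rpow_nonneg (ht.trans htE) _
  calc t ≤ E ^ (1 - 2 * θ) * t ^ (2 * θ) := le_rpow_one_sub_mul_rpow ht htE (by linarith)
    _ = E ^ (1 - 2 * θ) * (t ^ θ) ^ 2 := by rw [mul_comm 2 θ, Real.rpow_mul ht, Real.rpow_two]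
    _ ≤ E ^ (1 - 2 * θ) * (C * s) ^ 2 := by gcongr
    _ = C ^ 2 * E ^ (1 - 2 * θ) * s ^ 2 := by ring

section SufficientDecrease

variable {e g : ℕ → ℝ} {a K : ℝ}

lemma le_div_add_mul_of_decrease_of_error_bound (ha : 0 < a) (hK : 0 ≤ K)
    (hdec : ∀ k, e (k + 1) ≤ e k - a * g k ^ 2) (hbound : ∀ k, e k ≤ K * g k ^ 2) (k : ℕ) :
    e (k + 1) ≤ K / (a + K) * e k := by
  have hnext : e (k + 1) ≤ K * g k ^ 2 := by nlinarith [hdec k, hbound k, sq_nonneg (g k)]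
  rw [div_mul_eq_mul_div, le_div_iff₀ (by positivity)]
  -- `K` times the decrease plus `a` times `hnext`
  linarith [mul_le_mul_of_nonneg_left (hdec k) hK, mul_le_mul_of_nonneg_left hnext ha.le]

lemma exists_le_geometric_of_decrease_of_error_bound (ha : 0 < a) (hK : 0 < K)
    (he : ∀ k, 0 ≤ e k) (hg : ∀ k, 0 ≤ g k)
    (hdec : ∀ k, e (k + 1) ≤ e k - a * g k ^ 2) (hbound : ∀ k, e k ≤ K * g k ^ 2) :
    ∃ σ ∈ Ioo (0 : ℝ) 1, ∀ k, g k ≤ √(e 0 / a) * σ ^ k := by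
  set ρ := K / (a + K)
  have hρ0 : 0 < ρ := by positivity
  have hρ1 : ρ < 1 := (div_lt_one (by positivity)).2 (by linarith)
  refine ⟨√ρ, ⟨Real.sqrt_pos.2 hρ0, (Real.sqrt_lt' one_pos).2 (by simpa using hρ1)⟩, fun k => ?_⟩
  have hgeom : e k ≤ ρ ^ k * e 0 :=
    le_geom hρ0.le k fun j _ => le_div_add_mul_of_decrease_of_error_bound ha hK.le hdec hbound j
  have hsq : g k ^ 2 ≤ (√(e 0 / a) * √ρ ^ k) ^ 2 := by
    rw [mul_pow, ← pow_mul, mul_comm k 2, pow_mul, Real.sq_sqrt (div_nonneg (he 0) ha.le),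
      Real.sq_sqrt hρ0.le, div_mul_eq_mul_div, le_div_iff₀ ha]
    nlinarith [he (k + 1), hdec k]
  exact (pow_le_pow_iff_left₀ (hg k) (by positivity) two_ne_zero).1 hsq

end SufficientDecrease

lemma exists_norm_sub_le_geometric {E : Type*} [NormedAddCommGroup E] {x : ℕ → E} {x₀ : E}
    {C σ : ℝ} (hσ : σ ∈ Ioo (0 : ℝ) 1) (hx : Tendsto x atTop (nhds x₀))
    (hstep : ∀ k, ‖x (k + 1) - x k‖ ≤ C * σ ^ k) :
    ∃ γ > (0 : ℝ), ∃ ϱ ∈ Ioo (0 : ℝ) 1, ∀ k, ‖x k - x₀‖ ≤ γ * ϱ ^ k := by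
  refine ⟨max (C / (1 - σ)) 1, by positivity, σ, hσ, fun k => ?_⟩
  have hdist : ∀ k, dist (x k) (x (k + 1)) ≤ C * σ ^ k := fun k => by
    rw [dist_comm, dist_eq_norm]; exact hstep k
  calc ‖x k - x₀‖ ≤ C * σ ^ k / (1 - σ) := by
        rw [← dist_eq_norm]; exact dist_le_of_le_geometric_of_tendsto σ C hσ.2 hdist hx k
    _ = C / (1 - σ) * σ ^ k := by ring
    _ ≤ max (C / (1 - σ)) 1 * σ ^ k :=
        mul_le_mul_of_nonneg_right (le_max_left _ _) (pow_nonneg hσ.1.le k)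

theorem kl_linear_convergence_rate_general
    {n : ℕ} (f : EuclideanSpace ℝ (Fin n) → ℝ)
    (η αmin αmax : ℝ) (hη : 0 < η) (hαmin : 0 < αmin)
    (x : ℕ → EuclideanSpace ℝ (Fin n)) (α : ℕ → ℝ)
    (xstar : EuclideanSpace ℝ (Fin n))
    (hlim : Tendsto x atTop (nhds xstar))
    (hxf : ∀ k, f xstar ≤ f (x k))
    (hdec : ∀ k, f (x (k + 1)) ≤ f (x k) - η * α k * ‖gradient f (x k)‖ ^ 2)
    (hstep : ∀ k, ‖x (k + 1) - x k‖
      = 2 * α k * ‖gradient f (x k)‖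
          / Real.sqrt (1 + (α k) ^ 2 * ‖gradient f (x k)‖ ^ 2))
    (hα : ∀ k, αmin ≤ α k) (hα' : ∀ k, α k ≤ αmax)
    (θ : ℝ) (hθ : θ ∈ Set.Ioc (0 : ℝ) (1 / 2))
    (U : Set (EuclideanSpace ℝ (Fin n)))
    (hxU : ∀ k, x k ∈ U)
    (C₁ : ℝ) (hC₁ : 0 < C₁)
    (hKL : ∀ y ∈ U, |f y - f xstar| ^ θ ≤ C₁ * ‖gradient f y‖) :
    ∃ γ > (0 : ℝ), ∃ ϱ ∈ Set.Ioo (0 : ℝ) 1,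
      ∀ k, ‖x k - xstar‖ ≤ γ * ϱ ^ k := by
  set e : ℕ → ℝ := fun k => f (x k) - f xstar
  set g : ℕ → ℝ := fun k => ‖gradient f (x k)‖
  have he : ∀ k, 0 ≤ e k := fun k => sub_nonneg.2 (hxf k)
  have hdec' : ∀ k, e (k + 1) ≤ e k - η * αmin * g k ^ 2 := fun k => by
    have := mul_le_mul_of_nonneg_right (mul_le_mul_of_nonneg_left (hα k) hη.le) (sq_nonneg (g k))
    dsimp only [e, g] at this ⊢
    linarith [hdec k]
  have hanti : Antitone e := antitone_nat_of_succ_le fun k => by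
    nlinarith [hdec' k, sq_nonneg (g k), mul_pos hη hαmin]
  have hbound : ∀ k, e k ≤ C₁ ^ 2 * (e 0 + 1) ^ (1 - 2 * θ) * g k ^ 2 := fun k =>
    le_mul_sq_of_rpow_le_mul (he k) ((hanti k.zero_le).trans (le_add_of_nonneg_right zero_le_one))
      hθ.2 (by rw [← abs_of_nonneg (he k)]; exact hKL _ (hxU k))
  obtain ⟨σ, hσ, hg⟩ := exists_le_geometric_of_decrease_of_error_bound (by positivity)
    (mul_pos (pow_pos hC₁ 2) (Real.rpow_pos_of_pos (by linarith [he 0]) _))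
    he (fun k => norm_nonneg _) hdec' hbound
  refine exists_norm_sub_le_geometric (C := 2 * αmax * √(e 0 / (η * αmin))) hσ hlim fun k => ?_
  have hαk : 0 < α k := hαmin.trans_le (hα k)
  have hαmax : 0 ≤ αmax := hαk.le.trans (hα' k)
  calc ‖x (k + 1) - x k‖ ≤ 2 * α k * g k := by
        rw [hstep k]
        exact div_le_self (by positivity) (Real.one_le_sqrt.2 (le_add_of_nonneg_right (by positivity)))
    _ ≤ 2 * αmax * (√(e 0 / (η * αmin)) * σ ^ k) := by
        gcongr
        exacts [hα' k, hg k]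
    _ = 2 * αmax * √(e 0 / (η * αmin)) * σ ^ k := by ring

/-- under the Kurdyka–Łojasiewicz inequality with exponent
`θ ∈ (0, 1/2]`, the iterates converge at least R-linearly:
`‖x_k − x⋆‖ ≤ γ ϱ^k` for some `γ > 0` and `ϱ ∈ (0,1)`. -/
theorem kl_linear_convergence_rate
    {n : ℕ} (f : EuclideanSpace ℝ (Fin n) → ℝ)
    (hf : ContDiff ℝ 1 f)
    (η αmin αmax M : ℝ) (hη : 0 < η) (hαmin : 0 < αmin)
    (x : ℕ → EuclideanSpace ℝ (Fin n)) (α : ℕ → ℝ)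
    (xstar : EuclideanSpace ℝ (Fin n))
    (hlim : Tendsto x atTop (nhds xstar))
    (hcrit : gradient f xstar = 0)
    (hxf : ∀ k, f xstar ≤ f (x k))
    (hdec : ∀ k, f (x (k + 1)) ≤ f (x k) - η * α k * ‖gradient f (x k)‖ ^ 2)
    (hstep : ∀ k, ‖x (k + 1) - x k‖
      = 2 * α k * ‖gradient f (x k)‖
          / Real.sqrt (1 + (α k) ^ 2 * ‖gradient f (x k)‖ ^ 2))
    (hα : ∀ k, αmin ≤ α k) (hα' : ∀ k, α k ≤ αmax)
    (hgM : ∀ k, ‖gradient f (x k)‖ ≤ M)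
    (θ : ℝ) (hθ : θ ∈ Set.Ioc (0 : ℝ) (1 / 2))
    (U : Set (EuclideanSpace ℝ (Fin n))) (hU : U ∈ nhds xstar)
    (hxU : ∀ k, x k ∈ U)
    (C₁ : ℝ) (hC₁ : 0 < C₁)
    (hKL : ∀ y ∈ U, |f y - f xstar| ^ θ ≤ C₁ * ‖gradient f y‖) :
    ∃ γ > (0 : ℝ), ∃ ϱ ∈ Set.Ioo (0 : ℝ) 1,
      ∀ k, ‖x k - xstar‖ ≤ γ * ϱ ^ k :=
  kl_linear_convergence_rate_general f η αmin αmax hη hαmin x α xstar hlim hxf hdec hstep hα hα' θ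
    hθ U hxU C₁ hC₁ hKL
end

section
/- Let f : ℝ^n → ℝ be continuously differentiable, η > 0, and let {x_k} be a sequence converging to a critical point x_* with f(x_k) ≥ f(x_*) for all k, satisfying for each k the sufficient decrease f(x_{k+1}) ≤ f(x_k) − η α_k ‖∇f(x_k)‖², the step-length identity ‖x_{k+1} − x_k‖ = 2 α_k ‖∇f(x_k)‖ / √(1 + α_k² ‖∇f(x_k)‖²), the step-size bounds 0 < α_min ≤ α_k ≤ α_max, and the gradient bound ‖∇f(x_k)‖ ≤ M. Suppose f satisfies the Kurdyka–Łojasiewicz inequality at x_* with exponent θ ∈ (1/2, 1): there are a neighborhood U of x_* containing all x_k and a constant C₁ > 0 with |f(x) − f(x_*)|^θ ≤ C₁ ‖∇f(x)‖ for all x ∈ U. Then the sequence converges sublinearly: there exists γ > 0 such that ‖x_k − x_*‖ ≤ γ k^{−(1−θ)/(2θ−1)} for all sufficiently large k. -/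
/-!
Write `e k = f (x k) - f x⋆` and `g k = ‖∇f (x k)‖`. Sufficient decrease and the KL
inequality give `e (k+1) ≤ e k - c * e k ^ (2θ)`, and the tangent-line inequality for the
convex map `t ↦ t ^ (1 - 2θ)` turns this into `e k ^ (1 - 2θ) ≥ (2θ - 1) c k`, i.e.
`e k = O(k ^ (-1 / (2θ - 1)))`. The tangent-line inequality for the concave map
`t ↦ t ^ (1 - θ)`, again combined with KL, bounds each step length by a constant times
`e k ^ (1 - θ) - e (k+1) ^ (1 - θ)`; telescoping, the length of the whole path from `x k`,
hence `‖x k - x⋆‖`, is `O(e k ^ (1 - θ)) = O(k ^ (-(1 - θ) / (2θ - 1)))`.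
-/

open Filter Topology Finset Real

namespace Real

theorem mul_rpow_sub_one_mul_sub_le_rpow_sub_rpow_s18 {s t p : ℝ} (hs : 0 ≤ s) (ht : 0 < t)
    (hp₀ : 0 ≤ p) (hp₁ : p ≤ 1) : p * t ^ (p - 1) * (t - s) ≤ t ^ p - s ^ p := by
  have hu : s ^ p = t ^ p * (s / t) ^ p := by
    rw [← mul_rpow ht.le (div_nonneg hs ht.le), mul_div_cancel₀ _ ht.ne']
  have hbern : (s / t) ^ p ≤ 1 + p * (s / t - 1) := by
    simpa using rpow_one_add_le_one_add_mul_self (s := s / t - 1)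
      (by linarith [div_nonneg hs ht.le]) hp₀ hp₁
  calc p * t ^ (p - 1) * (t - s) = t ^ p - t ^ p * (1 + p * (s / t - 1)) := by
        rw [rpow_sub ht, rpow_one]; field_simp; ring
    _ ≤ t ^ p - s ^ p := by rw [hu]; gcongr

theorem rpow_sub_rpow_le_mul_rpow_sub_one_mul_sub {s t p : ℝ} (hs : 0 < s) (ht : 0 < t)
    (hp : p ≤ 0) : t ^ p - s ^ p ≤ p * t ^ (p - 1) * (t - s) := by
  have hbern : 1 + (1 - p) * (t / s - 1) ≤ (t / s) ^ (1 - p) := by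
    simpa using one_add_mul_self_le_rpow_one_add (s := t / s - 1)
      (by linarith [div_nonneg ht.le hs.le]) (by linarith : 1 ≤ 1 - p)
  have hv : (t / s) ^ (1 - p) = t * s ^ p / (s * t ^ p) := by
    rw [div_rpow ht.le hs.le, rpow_sub ht, rpow_sub hs, rpow_one, rpow_one]
    field_simp
  have hbern_cleared : t ^ p * (t - p * (t - s)) ≤ t * s ^ p := by
    rw [hv, le_div_iff₀ (by positivity)] at hbern
    field_simp at hbern
    linarith
  rw [rpow_sub ht, rpow_one, mul_div_assoc', div_mul_eq_mul_div, le_div_iff₀ ht]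
  linarith

end Real

theorem dist_le_of_tendsto_of_sum_Ico_le {X : Type*} [PseudoMetricSpace X] {x : ℕ → X}
    {y : X} (hx : Tendsto x atTop (𝓝 y)) {d : ℕ → ℝ}
    (hd : ∀ j, dist (x j) (x (j + 1)) ≤ d j) {k : ℕ} {B : ℝ}
    (hB : ∀ m, k ≤ m → ∑ j ∈ Ico k m, d j ≤ B) : dist (x k) y ≤ B :=
  le_of_tendsto (tendsto_const_nhds.dist hx) <| eventually_atTop.2
    ⟨k, fun m hkm => (dist_le_Ico_sum_of_dist_le hkm fun {j} _ _ => hd j).trans (hB m hkm)⟩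

theorem le_rpow_neg_inv_of_le_sub_mul_rpow {e : ℕ → ℝ} {c β : ℝ} (hc : 0 < c)
    (hβ : 0 < β) (he : ∀ k, 0 ≤ e k) (hrec : ∀ k, e (k + 1) ≤ e k - c * e k ^ (1 + β))
    {k : ℕ} (hk : 0 < k) :
    e k ≤ (β * c * k) ^ (-β⁻¹) := by
  have hmono : ∀ k, e (k + 1) ≤ e k := fun k => by
    linarith [hrec k, mul_nonneg hc.le (rpow_nonneg (he k) (1 + β))]
  have hgrow : ∀ k, 0 < e (k + 1) → e k ^ (-β) + β * c ≤ e (k + 1) ^ (-β) := fun k hk => by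
    have hpos : 0 < e k := hk.trans_le (hmono k)
    have htan := rpow_sub_rpow_le_mul_rpow_sub_one_mul_sub hk hpos (neg_nonpos.2 hβ.le)
    have hcancel : e k ^ (-β - 1) * e k ^ (1 + β) = 1 := by
      rw [← rpow_add hpos, show -β - 1 + (1 + β) = 0 by ring, rpow_zero]
    have hdrop : c ≤ e k ^ (-β - 1) * (e k - e (k + 1)) :=
      calc c = e k ^ (-β - 1) * (c * e k ^ (1 + β)) := by
            rw [mul_left_comm, hcancel, mul_one]
        _ ≤ e k ^ (-β - 1) * (e k - e (k + 1)) := by gcongr; linarith [hrec k]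
    linarith [mul_le_mul_of_nonneg_left hdrop hβ.le]
  have hlin : ∀ k, 0 < e k → β * c * k ≤ e k ^ (-β) := by
    intro k
    induction k with
    | zero => intro _; simpa using rpow_nonneg (he 0) (-β)
    | succ k ih =>
      intro hk
      push_cast
      linarith [ih (hk.trans_le (hmono k)), hgrow k hk]
  have hbck : 0 < β * c * k := by positivity
  rcases (he k).eq_or_lt with hzero | hpos
  · rw [← hzero]; exact (rpow_pos_of_pos hbck _).le
  · calc e k = (e k ^ (-β)) ^ (-β⁻¹) := by
          rw [← rpow_mul hpos.le, neg_mul_neg, mul_inv_cancel₀ hβ.ne', rpow_one]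
      _ ≤ (β * c * k) ^ (-β⁻¹) :=
          rpow_le_rpow_of_nonpos hbck (hlin k hpos) (neg_nonpos.2 (inv_nonneg.2 hβ.le))

structure IsKLDescent (e g : ℕ → ℝ) (a C θ : ℝ) : Prop where
  nonneg : ∀ k, 0 ≤ e k
  le_sub : ∀ k, e (k + 1) ≤ e k - a * g k ^ 2
  rpow_le : ∀ k, e k ^ θ ≤ C * g k

namespace IsKLDescent

variable {e g : ℕ → ℝ} {a C θ : ℝ}

theorem le_sub_mul_rpow (h : IsKLDescent e g a C θ) (ha : 0 ≤ a) (k : ℕ) :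
    e (k + 1) ≤ e k - a / C ^ 2 * e k ^ (2 * θ) := by
  have hsq : e k ^ (2 * θ) ≤ C ^ 2 * g k ^ 2 := by
    rw [mul_comm, rpow_mul (h.nonneg k), rpow_two, ← mul_pow]
    exact pow_le_pow_left₀ (rpow_nonneg (h.nonneg k) θ) (h.rpow_le k) 2
  have hdrop : a / C ^ 2 * e k ^ (2 * θ) ≤ a * g k ^ 2 := by
    rcases eq_or_ne C 0 with rfl | hC
    · simpa using mul_nonneg ha (sq_nonneg (g k))
    · calc a / C ^ 2 * e k ^ (2 * θ) ≤ a / C ^ 2 * (C ^ 2 * g k ^ 2) := by gcongr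
        _ = a * g k ^ 2 := by field_simp
  linarith [h.le_sub k]

theorem mul_le_rpow_sub_rpow (h : IsKLDescent e g a C θ) (ha : 0 < a) (hθ₀ : 0 ≤ θ)
    (hθ₁ : θ ≤ 1) (k : ℕ) :
    (1 - θ) * a / C * g k ≤ e k ^ (1 - θ) - e (k + 1) ^ (1 - θ) := by
  have hdrop := h.le_sub k
  have hnext := h.nonneg (k + 1)
  rcases (h.nonneg k).eq_or_lt with hzero | hpos
  · have hg : g k = 0 := pow_eq_zero_iff two_ne_zero |>.1 <|
      le_antisymm (nonpos_of_mul_nonpos_right (by linarith) ha) (sq_nonneg _)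
    have hnext0 : e (k + 1) = 0 := by linarith [mul_nonneg ha.le (sq_nonneg (g k))]
    simp [hg, ← hzero, hnext0]
  · have hθpos := rpow_pos_of_pos hpos θ
    have hCg : 0 < C * g k := hθpos.trans_le (h.rpow_le k)
    have hinv : (C * g k)⁻¹ ≤ e k ^ (-θ) := by
      rw [rpow_neg hpos.le]; exact inv_anti₀ hθpos (h.rpow_le k)
    have htan := mul_rpow_sub_one_mul_sub_le_rpow_sub_rpow_s18 hnext hpos (p := 1 - θ)
      (by linarith) (by linarith)
    rw [sub_sub_cancel_left] at htan
    calc (1 - θ) * a / C * g k = (1 - θ) * (C * g k)⁻¹ * (a * g k ^ 2) := by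
          field_simp [left_ne_zero_of_mul hCg.ne', right_ne_zero_of_mul hCg.ne']
      _ ≤ (1 - θ) * e k ^ (-θ) * (e k - e (k + 1)) := by
          gcongr
          linarith
      _ ≤ e k ^ (1 - θ) - e (k + 1) ^ (1 - θ) := htan

theorem mul_sum_Ico_le_rpow (h : IsKLDescent e g a C θ) (ha : 0 < a) (hθ₀ : 0 ≤ θ)
    (hθ₁ : θ ≤ 1) {k m : ℕ} (hkm : k ≤ m) :
    (1 - θ) * a / C * ∑ j ∈ Ico k m, g j ≤ e k ^ (1 - θ) :=
  calc (1 - θ) * a / C * ∑ j ∈ Ico k m, g j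
      ≤ ∑ j ∈ Ico k m, (e j ^ (1 - θ) - e (j + 1) ^ (1 - θ)) := by
        rw [mul_sum]; exact sum_le_sum fun j _ => h.mul_le_rpow_sub_rpow ha hθ₀ hθ₁ j
    _ = e k ^ (1 - θ) - e m ^ (1 - θ) := by
        have := sum_Ico_sub (fun j => e j ^ (1 - θ)) hkm
        rw [sum_sub_distrib] at this ⊢
        linarith
    _ ≤ e k ^ (1 - θ) := sub_le_self _ (rpow_nonneg (h.nonneg m) _)

theorem dist_le {X : Type*} [PseudoMetricSpace X] {x : ℕ → X} {y : X}
    (h : IsKLDescent e g a C θ) (ha : 0 < a) (hC : 0 < C) (hθ₀ : 0 ≤ θ) (hθ₁ : θ < 1)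
    (hx : Tendsto x atTop (𝓝 y)) {L : ℝ} (hL : 0 ≤ L)
    (hstep : ∀ j, dist (x j) (x (j + 1)) ≤ L * g j) (k : ℕ) :
    dist (x k) y ≤ L / ((1 - θ) * a / C) * e k ^ (1 - θ) := by
  have hc : 0 < (1 - θ) * a / C := div_pos (mul_pos (by linarith) ha) hC
  refine dist_le_of_tendsto_of_sum_Ico_le hx hstep fun m hkm => ?_
  rw [← mul_sum, div_mul_eq_mul_div, le_div_iff₀ hc, mul_assoc,
    mul_comm _ ((1 - θ) * a / C)]
  gcongr
  exact h.mul_sum_Ico_le_rpow ha hθ₀ hθ₁.le hkm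

theorem rpow_one_sub_le (h : IsKLDescent e g a C θ) (ha : 0 < a) (hC : C ≠ 0)
    (hθ₀ : 1 / 2 < θ) (hθ₁ : θ ≤ 1) {k : ℕ} (hk : 0 < k) :
    e k ^ (1 - θ) ≤ ((2 * θ - 1) * (a / C ^ 2)) ^ (-(1 - θ) / (2 * θ - 1)) *
      (k : ℝ) ^ (-(1 - θ) / (2 * θ - 1)) := by
  have hβ : 0 < 2 * θ - 1 := by linarith
  have hrate := le_rpow_neg_inv_of_le_sub_mul_rpow (c := a / C ^ 2) (by positivity) hβ
    h.nonneg (fun j => by convert h.le_sub_mul_rpow ha.le j using 4; ring) hk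
  calc e k ^ (1 - θ) ≤ (((2 * θ - 1) * (a / C ^ 2) * k) ^ (-(2 * θ - 1)⁻¹)) ^ (1 - θ) :=
        rpow_le_rpow (h.nonneg k) hrate (by linarith)
    _ = _ := by
        rw [← rpow_mul (by positivity), mul_rpow (by positivity) (Nat.cast_nonneg k),
          show -(2 * θ - 1)⁻¹ * (1 - θ) = -(1 - θ) / (2 * θ - 1) by ring]

end IsKLDescent

theorem kl_sublinear_convergence_rate_general
    {n : ℕ} (f : EuclideanSpace ℝ (Fin n) → ℝ)
    (η αmin αmax : ℝ) (hη : 0 < η) (hαmin : 0 < αmin)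
    (x : ℕ → EuclideanSpace ℝ (Fin n)) (α : ℕ → ℝ)
    (xstar : EuclideanSpace ℝ (Fin n))
    (hlim : Tendsto x atTop (nhds xstar))
    (hxf : ∀ k, f xstar ≤ f (x k))
    (hdec : ∀ k, f (x (k + 1)) ≤ f (x k) - η * α k * ‖gradient f (x k)‖ ^ 2)
    (hstep : ∀ k, ‖x (k + 1) - x k‖
      = 2 * α k * ‖gradient f (x k)‖
          / Real.sqrt (1 + (α k) ^ 2 * ‖gradient f (x k)‖ ^ 2))
    (hα : ∀ k, αmin ≤ α k) (hα' : ∀ k, α k ≤ αmax)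
    (θ : ℝ) (hθ : θ ∈ Set.Ioo (1 / 2 : ℝ) 1)
    (U : Set (EuclideanSpace ℝ (Fin n)))
    (hxU : ∀ k, x k ∈ U)
    (C₁ : ℝ) (hC₁ : 0 < C₁)
    (hKL : ∀ y ∈ U, |f y - f xstar| ^ θ ≤ C₁ * ‖gradient f y‖) :
    ∃ γ > (0 : ℝ), ∃ N : ℕ, ∀ k ≥ N,
      ‖x k - xstar‖ ≤ γ * (k : ℝ) ^ (-(1 - θ) / (2 * θ - 1)) := by
  obtain ⟨hθ₀, hθ₁⟩ := hθ
  have ha : 0 < η * αmin := mul_pos hη hαmin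
  have hαpos : ∀ k, 0 < α k := fun k => hαmin.trans_le (hα k)
  have hdesc : IsKLDescent (fun k => f (x k) - f xstar) (fun k => ‖gradient f (x k)‖)
      (η * αmin) C₁ θ :=
    { nonneg := fun k => sub_nonneg.2 (hxf k)
      le_sub := fun k => by
        nlinarith [hdec k, mul_nonneg (mul_nonneg hη.le (sub_nonneg.2 (hα k)))
          (sq_nonneg ‖gradient f (x k)‖)]
      rpow_le := fun k => by
        simpa [abs_of_nonneg (sub_nonneg.2 (hxf k))] using hKL (x k) (hxU k) }
  have hlen : ∀ k, dist (x k) (x (k + 1)) ≤ 2 * αmax * ‖gradient f (x k)‖ := fun k => by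
    have := hαpos k
    rw [dist_comm, dist_eq_norm, hstep k]
    have hsqrt : 1 ≤ √(1 + α k ^ 2 * ‖gradient f (x k)‖ ^ 2) :=
      one_le_sqrt.2 (le_add_of_nonneg_right (by positivity))
    refine (div_le_self (by positivity) hsqrt).trans ?_
    gcongr
    exact hα' k
  have hαmax : 0 < 2 * αmax := by linarith [hαpos 0, hα' 0]
  set L := 2 * αmax / ((1 - θ) * (η * αmin) / C₁)
  have hL : 0 < L := div_pos hαmax (div_pos (mul_pos (by linarith) ha) hC₁)
  refine ⟨L * ((2 * θ - 1) * (η * αmin / C₁ ^ 2)) ^ (-(1 - θ) / (2 * θ - 1)),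
    mul_pos hL (rpow_pos_of_pos (mul_pos (by linarith) (by positivity)) _), 1, fun k hk => ?_⟩
  calc ‖x k - xstar‖ = dist (x k) xstar := (dist_eq_norm _ _).symm
    _ ≤ L * (f (x k) - f xstar) ^ (1 - θ) :=
        hdesc.dist_le ha hC₁ (by linarith) hθ₁ hlim hαmax.le hlen k
    _ ≤ _ := by
        rw [mul_assoc]
        exact mul_le_mul_of_nonneg_left
          (hdesc.rpow_one_sub_le ha hC₁.ne' hθ₀ hθ₁.le hk) hL.le

/-- under the Kurdyka–Łojasiewicz inequality with exponent
`θ ∈ (1/2, 1)`, the iterates converge sublinearly: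
`‖x_k − x⋆‖ ≤ γ k^{−(1−θ)/(2θ−1)}` for all sufficiently large `k`. -/
theorem kl_sublinear_convergence_rate
    {n : ℕ} (f : EuclideanSpace ℝ (Fin n) → ℝ)
    (hf : ContDiff ℝ 1 f)
    (η αmin αmax M : ℝ) (hη : 0 < η) (hαmin : 0 < αmin)
    (x : ℕ → EuclideanSpace ℝ (Fin n)) (α : ℕ → ℝ)
    (xstar : EuclideanSpace ℝ (Fin n))
    (hlim : Tendsto x atTop (nhds xstar))
    (hcrit : gradient f xstar = 0)
    (hxf : ∀ k, f xstar ≤ f (x k))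
    (hdec : ∀ k, f (x (k + 1)) ≤ f (x k) - η * α k * ‖gradient f (x k)‖ ^ 2)
    (hstep : ∀ k, ‖x (k + 1) - x k‖
      = 2 * α k * ‖gradient f (x k)‖
          / Real.sqrt (1 + (α k) ^ 2 * ‖gradient f (x k)‖ ^ 2))
    (hα : ∀ k, αmin ≤ α k) (hα' : ∀ k, α k ≤ αmax)
    (hgM : ∀ k, ‖gradient f (x k)‖ ≤ M)
    (θ : ℝ) (hθ : θ ∈ Set.Ioo (1 / 2 : ℝ) 1)
    (U : Set (EuclideanSpace ℝ (Fin n))) (hU : U ∈ nhds xstar)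
    (hxU : ∀ k, x k ∈ U)
    (C₁ : ℝ) (hC₁ : 0 < C₁)
    (hKL : ∀ y ∈ U, |f y - f xstar| ^ θ ≤ C₁ * ‖gradient f y‖) :
    ∃ γ > (0 : ℝ), ∃ N : ℕ, ∀ k ≥ N,
      ‖x k - xstar‖ ≤ γ * (k : ℝ) ^ (-(1 - θ) / (2 * θ - 1)) :=
  kl_sublinear_convergence_rate_general f η αmin αmax hη hαmin x α xstar hlim hxf hdec hstep hα hα'
    θ hθ U hxU C₁ hC₁ hKL
end
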